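/- arXiv:1606.05245 — 10 statements merged into one kernel-verified Lean document; each statement's English description precedes it below -/
import Mathlib

section
/- Let p₁ ∈ (0,1). Let l_R be a {0,1}-valued process adapted to the filtration (𝓕_i) such that for every i ∈ ℕ, P(l_R(i+1) = 1 ∣ 𝓕_i) ≤ p₁ almost surely (a time-inhomogeneous Markov chain whose transition probabilities into the failure state 1 are bounded by p₁). Then for every ρ_R ∈ (p₁, 1), the series ∑_{k=1}^∞ P( ∑_{i=0}^{k-1} l_R(i) > ρ_R · k ) is finite. -/
open MeasureTheory Real ProbabilityTheory Finset

/-! Exponential (Chernoff) bound. Conditionally on `ℱ k`, the factor `exp (t * l (k + 1))` has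
mean at most `q = 1 + (exp t - 1) * p₁`, so `E exp (t * S (k + 1)) ≤ exp t * q ^ k` for the
partial sums `S`, and Markov's inequality bounds `P(S (k + 1) > ρ (k + 1))` by a constant times
`(q * exp (-ρ t)) ^ k`. Since `p₁ < ρ`, the ratio is `< 1` for suitable `t > 0`, so the series is
dominated by a geometric one. -/

lemma exists_pos_one_add_mul_lt_exp {p ρ : ℝ} (hp : 0 < p) (hpρ : p < ρ) :
    ∃ t > 0, 1 + (exp t - 1) * p < exp (ρ * t) := by
  set t := log (ρ / p) / 2 with ht_def
  have ht : 0 < t := div_pos (log_pos ((one_lt_div hp).2 hpρ)) two_pos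
  have hexp : exp t * p < ρ := by
    have : exp t < ρ / p := by
      rw [← exp_log (div_pos (hp.trans hpρ) hp)]
      exact exp_lt_exp.2 (by rw [ht_def]; linarith)
    rwa [lt_div_iff₀ hp] at this
  have hsub : exp t - 1 ≤ t * exp t := by
    have h := mul_le_mul_of_nonneg_right (one_sub_le_exp_neg t) (exp_pos t).le
    rw [← exp_add, neg_add_cancel, exp_zero] at h
    linarith
  refine ⟨t, ht, ?_⟩
  calc 1 + (exp t - 1) * p ≤ 1 + t * (exp t * p) := by nlinarith
    _ < ρ * t + 1 := by nlinarith
    _ ≤ exp (ρ * t) := add_one_le_exp _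

section ZeroOne

variable {Ω : Type*} {m mΩ : MeasurableSpace Ω} {μ : Measure Ω}

lemma integrable_exp_mul_of_le [IsFiniteMeasure μ] {f : Ω → ℝ} {C t : ℝ}
    (hf : Measurable f) (hfC : ∀ ω, f ω ≤ C) (ht : 0 ≤ t) : Integrable (fun ω => exp (t * f ω)) μ :=
  .of_bound (hf.const_mul t).exp.aestronglyMeasurable (exp (t * C)) <| ae_of_all _ fun ω => by
    rw [norm_of_nonneg (exp_pos _).le]
    exact exp_le_exp.2 (mul_le_mul_of_nonneg_left (hfC ω) ht)

lemma integral_mul_le_of_condExp_le [IsFiniteMeasure μ] (hm : m ≤ mΩ) {f g : Ω → ℝ}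
    {C c : ℝ} (hf : StronglyMeasurable[m] f) (hf0 : 0 ≤ f) (hfC : ∀ ω, f ω ≤ C)
    (hg : Integrable g μ) (hgc : μ[g | m] ≤ᵐ[μ] fun _ => c) :
    ∫ ω, f ω * g ω ∂μ ≤ c * ∫ ω, f ω ∂μ := by
  have hfm : AEStronglyMeasurable f μ := (hf.mono hm).aestronglyMeasurable
  have hf_bdd : ∀ᵐ ω ∂μ, ‖f ω‖ ≤ C :=
    ae_of_all _ fun ω => (norm_of_nonneg (hf0 ω)).trans_le (hfC ω)
  calc ∫ ω, f ω * g ω ∂μ = ∫ ω, (μ[f * g | m]) ω ∂μ := (integral_condExp hm).symm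
    _ = ∫ ω, f ω * (μ[g | m]) ω ∂μ :=
      integral_congr_ae (condExp_mul_of_stronglyMeasurable_left hf (hg.bdd_mul hfm hf_bdd) hg)
    _ ≤ ∫ ω, f ω * c ∂μ := by
      refine integral_mono_ae (integrable_condExp.bdd_mul hfm hf_bdd)
        ((Integrable.of_bound hfm C hf_bdd).mul_const c) ?_
      filter_upwards [hgc] with ω hω
      exact mul_le_mul_of_nonneg_left hω (hf0 ω)
    _ = c * ∫ ω, f ω ∂μ := by rw [integral_mul_const, mul_comm]

lemma exp_mul_eq_one_add_mul_indicator {X : Ω → ℝ} (hX : ∀ ω, X ω = 0 ∨ X ω = 1) (t : ℝ) :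
    (fun ω => exp (t * X ω))
      = (fun _ => (1 : ℝ)) + (exp t - 1) • {ω | X ω = 1}.indicator (fun _ => (1 : ℝ)) := by
  funext ω
  rcases hX ω with h | h <;> simp [h]

lemma condExp_exp_mul_le [IsFiniteMeasure μ] (hm : m ≤ mΩ) {X : Ω → ℝ} (hXm : Measurable X)
    (hX : ∀ ω, X ω = 0 ∨ X ω = 1) {p t : ℝ} (ht : 0 ≤ t)
    (hp : μ[{ω | X ω = 1}.indicator (fun _ => (1 : ℝ)) | m] ≤ᵐ[μ] fun _ => p) :
    μ[fun ω => exp (t * X ω) | m] ≤ᵐ[μ] fun _ => 1 + (exp t - 1) * p := by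
  have hind : Integrable ({ω | X ω = 1}.indicator fun _ => (1 : ℝ)) μ :=
    (integrable_const 1).indicator (hXm (measurableSet_singleton 1))
  rw [exp_mul_eq_one_add_mul_indicator hX]
  filter_upwards [condExp_add (integrable_const 1) (hind.smul (exp t - 1)) m,
    condExp_smul (exp t - 1) ({ω | X ω = 1}.indicator fun _ => (1 : ℝ)) m, hp]
    with ω hadd hsmul hle
  rw [hadd, Pi.add_apply, hsmul, condExp_const hm, Pi.smul_apply, smul_eq_mul]
  gcongr
  exact sub_nonneg.2 (one_le_exp ht)

end ZeroOne

section AdaptedSequence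

variable {Ω : Type*} {mΩ : MeasurableSpace Ω} {μ : Measure Ω} {ℱ : Filtration ℕ mΩ}
  {X : ℕ → Ω → ℝ}

lemma sum_range_le_of_zero_or_one (hX : ∀ i ω, X i ω = 0 ∨ X i ω = 1) (k : ℕ) (ω : Ω) :
    ∑ i ∈ range k, X i ω ≤ k := by
  simpa using sum_le_card_nsmul (range k) (X · ω) 1 fun i _ =>
    (hX i ω).elim (·.le.trans zero_le_one) (·.le)

lemma integral_exp_mul_sum_range_le [IsProbabilityMeasure μ]
    (hX : ∀ i ω, X i ω = 0 ∨ X i ω = 1) (hadapted : Adapted ℱ X) {p t : ℝ} (hp : 0 ≤ p) (ht : 0 ≤ t)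
    (hcond : ∀ i, μ[{ω | X (i + 1) ω = 1}.indicator (fun _ => (1 : ℝ)) | ℱ i] ≤ᵐ[μ] fun _ => p)
    (k : ℕ) :
    ∫ ω, exp (t * ∑ i ∈ range (k + 1), X i ω) ∂μ ≤ exp t * (1 + (exp t - 1) * p) ^ k := by
  have hXm i : Measurable (X i) := (hadapted i).mono (ℱ.le i) le_rfl
  induction k with
  | zero =>
    calc ∫ ω, exp (t * ∑ i ∈ range 1, X i ω) ∂μ ≤ ∫ _, exp t ∂μ := by
          refine integral_mono_of_nonneg (ae_of_all _ fun ω => (exp_pos _).le)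
            (integrable_const _) (ae_of_all _ fun ω => exp_le_exp.2 ?_)
          simpa using mul_le_mul_of_nonneg_left (sum_range_le_of_zero_or_one hX 1 ω) ht
      _ = exp t * (1 + (exp t - 1) * p) ^ 0 := by simp
  | succ k ih =>
    set q := 1 + (exp t - 1) * p
    have hq : 0 ≤ q := add_nonneg zero_le_one (mul_nonneg (sub_nonneg.2 (one_le_exp ht)) hp)
    have hSk : StronglyMeasurable[ℱ k] fun ω => exp (t * ∑ i ∈ range (k + 1), X i ω) :=
      ((Finset.measurable_fun_sum _ fun i hi => (hadapted i).mono
        (ℱ.mono (Nat.lt_succ_iff.mp (mem_range.mp hi))) le_rfl).const_mul t).exp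
        |>.stronglyMeasurable
    have hstep := integral_mul_le_of_condExp_le (ℱ.le k) hSk (fun ω => (exp_pos _).le)
      (fun ω => exp_le_exp.2 (mul_le_mul_of_nonneg_left (sum_range_le_of_zero_or_one hX _ ω) ht))
      (integrable_exp_mul_of_le (hXm (k + 1))
        (fun ω => (hX (k + 1) ω).elim (·.le.trans zero_le_one) (·.le)) ht)
      (condExp_exp_mul_le (ℱ.le k) (hXm (k + 1)) (hX (k + 1)) ht (hcond k))
    calc ∫ ω, exp (t * ∑ i ∈ range (k + 1 + 1), X i ω) ∂μ
        = ∫ ω, exp (t * ∑ i ∈ range (k + 1), X i ω) * exp (t * X (k + 1) ω) ∂μ := by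
          simp only [sum_range_succ _ (k + 1), mul_add, exp_add]
      _ ≤ q * ∫ ω, exp (t * ∑ i ∈ range (k + 1), X i ω) ∂μ := hstep
      _ ≤ q * (exp t * q ^ k) := mul_le_mul_of_nonneg_left ih hq
      _ = exp t * q ^ (k + 1) := by ring

lemma measure_mul_lt_sum_range_le [IsProbabilityMeasure μ]
    (hX : ∀ i ω, X i ω = 0 ∨ X i ω = 1) (hadapted : Adapted ℱ X) {p t : ℝ} (ρ : ℝ)
    (hp : 0 ≤ p) (ht : 0 ≤ t)
    (hcond : ∀ i, μ[{ω | X (i + 1) ω = 1}.indicator (fun _ => (1 : ℝ)) | ℱ i] ≤ᵐ[μ] fun _ => p)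
    (k : ℕ) :
    μ {ω | ρ * (k + 1 : ℕ) < ∑ i ∈ range (k + 1), X i ω}
      ≤ ENNReal.ofReal (exp ((1 - ρ) * t) * ((1 + (exp t - 1) * p) * exp (-(ρ * t))) ^ k) := by
  set S := fun ω => ∑ i ∈ range (k + 1), X i ω
  have hS : Measurable S :=
    Finset.measurable_fun_sum _ fun i _ => (hadapted i).mono (ℱ.le i) le_rfl
  have hexp : exp (-t * (ρ * (k + 1 : ℕ))) * exp t
      = exp ((1 - ρ) * t) * exp (-(ρ * t)) ^ k := by
    rw [← exp_nat_mul, ← exp_add, ← exp_add]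
    push_cast
    ring_nf
  calc μ {ω | ρ * (k + 1 : ℕ) < S ω} ≤ μ {ω | ρ * (k + 1 : ℕ) ≤ S ω} :=
        measure_mono <| Set.ofPred_subset_ofPred.2 fun _ => le_of_lt
    _ = ENNReal.ofReal (μ.real {ω | ρ * (k + 1 : ℕ) ≤ S ω}) :=
        (ENNReal.ofReal_toReal (measure_ne_top _ _)).symm
    _ ≤ ENNReal.ofReal (exp (-t * (ρ * (k + 1 : ℕ))) * mgf S μ t) := ENNReal.ofReal_le_ofReal <|
      measure_ge_le_exp_mul_mgf _ ht
        (integrable_exp_mul_of_le hS (sum_range_le_of_zero_or_one hX _) ht)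
    _ ≤ ENNReal.ofReal (exp (-t * (ρ * (k + 1 : ℕ))) * (exp t * (1 + (exp t - 1) * p) ^ k)) :=
      ENNReal.ofReal_le_ofReal <| mul_le_mul_of_nonneg_left
        (integral_exp_mul_sum_range_le hX hadapted hp ht hcond k) (exp_pos _).le
    _ = _ := by rw [mul_pow, ← mul_assoc, hexp]; ring_nf

end AdaptedSequence

/-- For a {0,1}-valued process adapted to a filtration whose
(conditional) transition probability into the failure state 1 is bounded by
`p₁ ∈ (0,1)`, the tail-probability series `∑ₖ P(∑_{i<k} l_R(i) > ρ_R k)` is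
finite for every `ρ_R ∈ (p₁, 1)`. -/
theorem random_loss_tail_summable
    {Ω : Type*} [MeasurableSpace Ω] (μ : Measure Ω) [IsProbabilityMeasure μ]
    (ℱ : Filtration ℕ (inferInstance : MeasurableSpace Ω))
    (p₁ : ℝ) (hp₁ : p₁ ∈ Set.Ioo (0 : ℝ) 1)
    (lR : ℕ → Ω → ℝ)
    (h01 : ∀ i ω, lR i ω = 0 ∨ lR i ω = 1)
    (hadapted : Adapted ℱ lR)
    (hcond : ∀ i, (μ[Set.indicator {ω | lR (i + 1) ω = 1} (fun _ => (1 : ℝ)) | ℱ i])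
      ≤ᵐ[μ] fun _ => p₁)
    (ρR : ℝ) (hρ : ρR ∈ Set.Ioo p₁ 1) :
    (∑' k : ℕ,
      μ {ω | ρR * (k + 1 : ℕ) < ∑ i ∈ Finset.range (k + 1), lR i ω}) < ⊤ := by
  obtain ⟨t, ht, hq⟩ := exists_pos_one_add_mul_lt_exp hp₁.1 hρ.1
  set r := (1 + (exp t - 1) * p₁) * exp (-(ρR * t)) with hr
  have hr0 : 0 ≤ r := mul_nonneg (by nlinarith [one_le_exp ht.le, hp₁.1]) (exp_pos _).le
  have hr1 : r < 1 := by rwa [hr, exp_neg, ← div_eq_mul_inv, div_lt_one (exp_pos _)]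
  calc _ ≤ ∑' k : ℕ, ENNReal.ofReal (exp ((1 - ρR) * t) * r ^ k) := ENNReal.tsum_le_tsum
        (measure_mul_lt_sum_range_le h01 hadapted ρR hp₁.1.le ht.le hcond)
    _ = ENNReal.ofReal (∑' k : ℕ, exp ((1 - ρR) * t) * r ^ k) := (ENNReal.ofReal_tsum_of_nonneg
        (fun k => by positivity) ((summable_geometric_of_lt_one hr0 hr1).mul_left _)).symm
    _ < ⊤ := ENNReal.ofReal_lt_top
end

section
/- Let p₁ ∈ (0,1) and ρ_M ∈ [0,1]. Let l_R be a {0,1}-valued process adapted to the filtration (𝓕_i) such that for every i ∈ ℕ, P(l_R(i+1) = 1 ∣ 𝓕_i) ≤ p₁ almost surely, and let l_M be a {0,1}-valued process (not necessarily independent of l_R) with ∑_{k=1}^∞ P( ∑_{i=0}^{k-1} l_M(i) > ρ_M · k ) < ∞. Define the overall loss process l(i) = l_R(i) + (1 − l_R(i))·l_M(i) and L(k) = ∑_{i=0}^{k-1} l(i). If p₁ + ρ_M < 1, then for every ρ ∈ (p₁ + ρ_M, 1), the series ∑_{k=1}^∞ P( L(k) > ρ·k ) is finite. -/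
/-!
Since `l ≤ l_R + l_M`, the event `L(k) > ρ k` forces `∑ l_R > (ρ - ρ_M) k` or `∑ l_M > ρ_M k`,
so it suffices to sum the tails of `l_R` at the level `a = ρ - ρ_M > p₁`. That is a Chernoff
bound: the conditional bound on `l_R` gives `E[exp (t ∑_{j<k} l_R (j+1))] ≤ (1 + p₁ (eᵗ - 1))ᵏ`,
and for small `t > 0` the rate `(1 + p₁ (eᵗ - 1)) e^{-t a}` is below `1` because `p₁ < a`.
-/

open MeasureTheory Filter Topology ProbabilityTheory Finset Real

section

variable {Ω : Type*} {m0 : MeasurableSpace Ω}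

/-- The event `∑_{i<k+1} X i > a (k+1)`: index `k` is the `(k+1)`-st term of the paper's series
`∑_{k ≥ 1} P(L(k) > a k)`. -/
def tailEvent (X : ℕ → Ω → ℝ) (a : ℝ) (k : ℕ) : Set Ω :=
  {ω | a * (k + 1 : ℕ) < ∑ i ∈ range (k + 1), X i ω}

def TailSummable (μ : Measure Ω) (X : ℕ → Ω → ℝ) (a : ℝ) : Prop :=
  ∑' k : ℕ, μ (tailEvent X a k) < ⊤

theorem tailEvent_subset_union {X Y Z : ℕ → Ω → ℝ} {a b : ℝ}
    (hZ : ∀ i ω, Z i ω ≤ X i ω + Y i ω) (k : ℕ) :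
    tailEvent Z (a + b) k ⊆ tailEvent X a k ∪ tailEvent Y b k := by
  intro ω hω
  by_contra! h
  simp only [tailEvent, Set.mem_union, Set.mem_ofPred_eq, not_or, not_lt] at h hω
  have hsum := sum_le_sum fun i (_ : i ∈ range (k + 1)) => hZ i ω
  rw [sum_add_distrib] at hsum
  linarith

theorem TailSummable.of_le_add {μ : Measure Ω} {X Y Z : ℕ → Ω → ℝ} {a b : ℝ}
    (hX : TailSummable μ X a) (hY : TailSummable μ Y b) (hZ : ∀ i ω, Z i ω ≤ X i ω + Y i ω) :
    TailSummable μ Z (a + b) :=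
  calc ∑' k, μ (tailEvent Z (a + b) k)
      ≤ ∑' k, (μ (tailEvent X a k) + μ (tailEvent Y b k)) := ENNReal.tsum_le_tsum fun k =>
        (measure_mono (tailEvent_subset_union hZ k)).trans (measure_union_le _ _)
    _ = ∑' k, μ (tailEvent X a k) + ∑' k, μ (tailEvent Y b k) := ENNReal.tsum_add
    _ < ⊤ := ENNReal.add_lt_top.2 ⟨hX, hY⟩

theorem indicator_setOf_eq_one_eq_self {x : Ω → ℝ} (hx : ∀ ω, x ω = 0 ∨ x ω = 1) :
    {ω | x ω = 1}.indicator (fun _ => (1 : ℝ)) = x := by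
  ext ω
  rcases hx ω with h | h <;> simp [h]

theorem exp_mul_of_eq_zero_or_eq_one {x : ℝ} (t : ℝ) (hx : x = 0 ∨ x = 1) :
    exp (t * x) = 1 + x * (exp t - 1) := by
  rcases hx with rfl | rfl <;> simp

theorem exists_pos_mul_exp_sub_one_lt {p a : ℝ} (hp : 0 ≤ p) (hpa : p < a) :
    ∃ t > 0, p * (exp t - 1) < t * a := by
  have hlim : Tendsto (fun t => p * exp t) (𝓝[>] 0) (𝓝 p) := by
    simpa using ((continuous_exp.tendsto 0).const_mul p).mono_left nhdsWithin_le_nhds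
  obtain ⟨t, hta, ht⟩ := ((hlim.eventually (gt_mem_nhds hpa)).and self_mem_nhdsWithin).exists
  refine ⟨t, ht, ?_⟩
  -- `1 - t ≤ e^{-t}` gives `eᵗ - 1 ≤ t eᵗ`
  have hexp : exp t - 1 ≤ t * exp t := by
    have := mul_le_mul_of_nonneg_left (add_one_le_exp (-t)) (exp_pos t).le
    rw [← exp_add, add_neg_cancel, exp_zero] at this
    linarith
  calc p * (exp t - 1) ≤ t * (p * exp t) := by nlinarith
    _ < t * a := mul_lt_mul_of_pos_left hta ht

theorem integral_mul_le_of_condExp_le_s3 {m : MeasurableSpace Ω} {μ : Measure[m0] Ω}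
    [IsFiniteMeasure μ] (hm : m ≤ m0) {g Y : Ω → ℝ} {p : ℝ} (hg : StronglyMeasurable[m] g)
    (hg0 : 0 ≤ g) (hgi : Integrable g μ) (hgY : Integrable (g * Y) μ) (hY : Integrable Y μ)
    (hYp : μ[Y | m] ≤ᵐ[μ] fun _ => p) :
    ∫ ω, g ω * Y ω ∂μ ≤ p * ∫ ω, g ω ∂μ :=
  calc ∫ ω, g ω * Y ω ∂μ = ∫ ω, (μ[g * Y | m]) ω ∂μ := (integral_condExp hm).symm
    _ ≤ ∫ ω, g ω * p ∂μ := integral_mono_ae integrable_condExp (hgi.mul_const p) <| by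
        filter_upwards [condExp_mul_of_stronglyMeasurable_left hg hgY hY, hYp] with ω h1 h2
        rw [h1]
        exact mul_le_mul_of_nonneg_left h2 (hg0 ω)
    _ = p * ∫ ω, g ω ∂μ := by rw [integral_mul_const, mul_comm]

section BernoulliIncrements

variable {μ : Measure Ω} {ℱ : Filtration ℕ m0} {X : ℕ → Ω → ℝ}

theorem measurable_sum_succ (hadapt : Adapted ℱ X) (k : ℕ) :
    Measurable[ℱ k] fun ω => ∑ j ∈ range k, X (j + 1) ω :=
  measurable_fun_sum _ fun j hj => (hadapt (j + 1)).mono (ℱ.mono (mem_range.mp hj)) le_rfl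

theorem integrable_exp_mul_sum_succ [IsFiniteMeasure μ] (hX : ∀ i ω, X i ω = 0 ∨ X i ω = 1)
    (hadapt : Adapted ℱ X) (t : ℝ) (k : ℕ) :
    Integrable (fun ω => exp (t * ∑ j ∈ range k, X (j + 1) ω)) μ := by
  have hmeas := ((measurable_sum_succ hadapt k).mono (ℱ.le k) le_rfl).const_mul t
  refine .of_bound hmeas.exp.aestronglyMeasurable (exp (|t| * k)) (ae_of_all _ fun ω => ?_)
  have hX01 : ∀ j, 0 ≤ X (j + 1) ω ∧ X (j + 1) ω ≤ 1 := fun j => by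
    rcases hX (j + 1) ω with h | h <;> simp [h]
  have hS0 : 0 ≤ ∑ j ∈ range k, X (j + 1) ω := sum_nonneg fun j _ => (hX01 j).1
  have hSk : ∑ j ∈ range k, X (j + 1) ω ≤ k :=
    (sum_le_sum fun j _ => (hX01 j).2).trans (by simp)
  rw [norm_of_nonneg (exp_pos _).le, exp_le_exp]
  calc t * ∑ j ∈ range k, X (j + 1) ω ≤ |t| * ∑ j ∈ range k, X (j + 1) ω :=
        mul_le_mul_of_nonneg_right (le_abs_self t) hS0
    _ ≤ |t| * k := mul_le_mul_of_nonneg_left hSk (abs_nonneg t)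

theorem mgf_sum_succ_le [IsProbabilityMeasure μ] {p t : ℝ}
    (hX : ∀ i ω, X i ω = 0 ∨ X i ω = 1) (hadapt : Adapted ℱ X)
    (hcond : ∀ i, μ[X (i + 1) | ℱ i] ≤ᵐ[μ] fun _ => p) (hp : 0 ≤ p) (ht : 0 ≤ t) (k : ℕ) :
    mgf (fun ω => ∑ j ∈ range k, X (j + 1) ω) μ t ≤ (1 + p * (exp t - 1)) ^ k := by
  induction k with
  | zero => simp [mgf]
  | succ k ih =>
    set f := fun ω => exp (t * ∑ j ∈ range k, X (j + 1) ω)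
    have hf : Integrable f μ := integrable_exp_mul_sum_succ hX hadapt t k
    have hXbdd : ∀ᵐ ω ∂μ, ‖X (k + 1) ω‖ ≤ 1 :=
      ae_of_all _ fun ω => by rcases hX (k + 1) ω with h | h <;> simp [h]
    have hXmeas : AEStronglyMeasurable (X (k + 1)) μ :=
      ((hadapt (k + 1)).mono (ℱ.le (k + 1)) le_rfl).aestronglyMeasurable
    have hfX : Integrable (f * X (k + 1)) μ := hf.mul_bdd hXmeas hXbdd
    have het : 0 ≤ exp t - 1 := by linarith [one_le_exp ht]
    have hstep : ∀ ω, exp (t * ∑ j ∈ range (k + 1), X (j + 1) ω)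
        = f ω + (exp t - 1) * (f ω * X (k + 1) ω) := fun ω => by
      rw [sum_range_succ, mul_add, exp_add, exp_mul_of_eq_zero_or_eq_one t (hX _ ω)]
      ring
    calc mgf (fun ω => ∑ j ∈ range (k + 1), X (j + 1) ω) μ t
        = ∫ ω, f ω ∂μ + (exp t - 1) * ∫ ω, f ω * X (k + 1) ω ∂μ := by
          simp only [mgf, hstep]
          exact (integral_add hf (hfX.const_mul _)).trans (by rw [integral_const_mul]; rfl)
      _ ≤ ∫ ω, f ω ∂μ + (exp t - 1) * (p * ∫ ω, f ω ∂μ) := by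
          gcongr
          exact integral_mul_le_of_condExp_le_s3 (ℱ.le k)
            ((measurable_sum_succ hadapt k).const_mul t).exp.stronglyMeasurable
            (fun ω => (exp_pos _).le) hf hfX (.of_bound hXmeas 1 hXbdd) (hcond k)
      _ = (1 + p * (exp t - 1)) * mgf (fun ω => ∑ j ∈ range k, X (j + 1) ω) μ t := by
          rw [mgf]
          ring
      _ ≤ (1 + p * (exp t - 1)) * (1 + p * (exp t - 1)) ^ k := by gcongr
      _ = (1 + p * (exp t - 1)) ^ (k + 1) := (pow_succ' _ _).symm

theorem tailSummable_of_condExp_le [IsProbabilityMeasure μ] {p a : ℝ}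
    (hX : ∀ i ω, X i ω = 0 ∨ X i ω = 1) (hadapt : Adapted ℱ X)
    (hcond : ∀ i, μ[X (i + 1) | ℱ i] ≤ᵐ[μ] fun _ => p) (hp : 0 ≤ p) (hpa : p < a) :
    TailSummable μ X a := by
  obtain ⟨t, ht, hta⟩ := exists_pos_mul_exp_sub_one_lt hp hpa
  set B := 1 + p * (exp t - 1)
  set r := B * exp (-t * a) with hr
  have hr0 : 0 ≤ r := mul_nonneg (by nlinarith [one_le_exp ht.le]) (exp_pos _).le
  have hr1 : r < 1 :=
    calc r ≤ exp (p * (exp t - 1)) * exp (-t * a) := by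
          rw [hr]
          gcongr
          linarith [add_one_le_exp (p * (exp t - 1))]
      _ = exp (p * (exp t - 1) - t * a) := by rw [← exp_add]; ring_nf
      _ < 1 := exp_lt_one_iff.2 (by linarith)
  have hbound : ∀ k : ℕ, μ (tailEvent X a k) ≤ ENNReal.ofReal (exp (t * (1 - a)) * r ^ k) := by
    intro k
    set F := {ω | a * (k + 1 : ℕ) - 1 ≤ ∑ j ∈ range k, X (j + 1) ω}
    -- `X 0` is not controlled by any conditional bound; it costs at most `1`.
    have hsub : tailEvent X a k ⊆ F := fun ω hω => by
      simp only [tailEvent, F, Set.mem_ofPred_eq, sum_range_succ'] at hω ⊢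
      rcases hX 0 ω with h | h <;> rw [h] at hω <;> linarith
    have hexp : exp (-t * (a * (k + 1 : ℕ) - 1)) * B ^ k = exp (t * (1 - a)) * r ^ k := by
      rw [hr, mul_pow, ← exp_nat_mul, mul_left_comm, ← exp_add]
      push_cast
      ring_nf
    calc μ (tailEvent X a k) ≤ μ F := measure_mono hsub
      _ = ENNReal.ofReal (μ.real F) := (ofReal_measureReal).symm
      _ ≤ ENNReal.ofReal (exp (t * (1 - a)) * r ^ k) := by
          rw [← hexp]
          gcongr
          refine (measure_ge_le_exp_mul_mgf _ ht.le
            (integrable_exp_mul_sum_succ hX hadapt t k)).trans ?_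
          gcongr
          exact mgf_sum_succ_le hX hadapt hcond hp ht.le k
  exact (ENNReal.tsum_le_tsum hbound).trans_lt
    ((summable_geometric_of_lt_one hr0 hr1).mul_left _).tsum_ofReal_lt_top

end BernoulliIncrements

end

theorem combined_dependent_loss_tail_summable_general
    {Ω : Type*} [MeasurableSpace Ω] (μ : Measure Ω) [IsProbabilityMeasure μ]
    (ℱ : Filtration ℕ (inferInstance : MeasurableSpace Ω))
    (p₁ : ℝ) (hp₁ : p₁ ∈ Set.Ioo (0 : ℝ) 1)
    (ρM : ℝ)
    (lR lM : ℕ → Ω → ℝ)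
    (hR01 : ∀ i ω, lR i ω = 0 ∨ lR i ω = 1)
    (hM01 : ∀ i ω, lM i ω = 0 ∨ lM i ω = 1)
    (hadapted : Adapted ℱ lR)
    (hcond1 : ∀ i, (μ[Set.indicator {ω | lR (i + 1) ω = 1} (fun _ => (1 : ℝ)) | ℱ i])
      ≤ᵐ[μ] fun _ => p₁)
    (hMsum : (∑' k : ℕ,
      μ {ω | ρM * (k + 1 : ℕ) < ∑ i ∈ Finset.range (k + 1), lM i ω}) < ⊤)
    (l : ℕ → Ω → ℝ)
    (hl : ∀ i ω, l i ω = lR i ω + (1 - lR i ω) * lM i ω)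
    (ρ : ℝ) (hρ : ρ ∈ Set.Ioo (p₁ + ρM) 1) :
    (∑' k : ℕ,
      μ {ω | ρ * (k + 1 : ℕ) < ∑ i ∈ Finset.range (k + 1), l i ω}) < ⊤ := by
  have hcondR : ∀ i, μ[lR (i + 1) | ℱ i] ≤ᵐ[μ] fun _ => p₁ := fun i => by
    simpa only [indicator_setOf_eq_one_eq_self (hR01 (i + 1))] using hcond1 i
  have hR : TailSummable μ lR (ρ - ρM) :=
    tailSummable_of_condExp_le hR01 hadapted hcondR hp₁.1.le (by linarith [hρ.1])
  have hle : ∀ i ω, l i ω ≤ lR i ω + lM i ω := fun i ω => by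
    rw [hl]
    rcases hR01 i ω with h | h <;> rcases hM01 i ω with h' | h' <;> norm_num [h, h']
  have h := hR.of_le_add hMsum hle
  rwa [sub_add_cancel] at h

/-- combination of (possibly dependent) random and malicious packet
losses. If the random-loss process has conditional failure probability bounded
by `p₁`, the malicious process has summable tail probabilities at level
`ρ_M ∈ [0,1]`, and `p₁ + ρ_M < 1`, then the overall loss process
`l(i) = l_R(i) + (1 − l_R(i))·l_M(i)` has summable tail probabilities at every
level `ρ ∈ (p₁ + ρ_M, 1)`. -/
theorem combined_dependent_loss_tail_summable
    {Ω : Type*} [MeasurableSpace Ω] (μ : Measure Ω) [IsProbabilityMeasure μ]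
    (ℱ : Filtration ℕ (inferInstance : MeasurableSpace Ω))
    (p₁ : ℝ) (hp₁ : p₁ ∈ Set.Ioo (0 : ℝ) 1)
    (ρM : ℝ) (hρM : ρM ∈ Set.Icc (0 : ℝ) 1)
    (lR lM : ℕ → Ω → ℝ)
    (hR01 : ∀ i ω, lR i ω = 0 ∨ lR i ω = 1)
    (hM01 : ∀ i ω, lM i ω = 0 ∨ lM i ω = 1)
    (hadapted : Adapted ℱ lR)
    (hcond1 : ∀ i, (μ[Set.indicator {ω | lR (i + 1) ω = 1} (fun _ => (1 : ℝ)) | ℱ i])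
      ≤ᵐ[μ] fun _ => p₁)
    (hMsum : (∑' k : ℕ,
      μ {ω | ρM * (k + 1 : ℕ) < ∑ i ∈ Finset.range (k + 1), lM i ω}) < ⊤)
    (l : ℕ → Ω → ℝ)
    (hl : ∀ i ω, l i ω = lR i ω + (1 - lR i ω) * lM i ω)
    (hsum : p₁ + ρM < 1)
    (ρ : ℝ) (hρ : ρ ∈ Set.Ioo (p₁ + ρM) 1) :
    (∑' k : ℕ,
      μ {ω | ρ * (k + 1 : ℕ) < ∑ i ∈ Finset.range (k + 1), l i ω}) < ⊤ :=
  combined_dependent_loss_tail_summable_general μ ℱ p₁ hp₁ ρM lR lM hR01 hM01 hadapted hcond1 hMsum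
    l hl ρ hρ
end

section
/- Let A ∈ ℝ^{n×n}, B ∈ ℝ^{n×m}, and let l be a {0,1}-valued process adapted to the filtration (𝓕_i) that is an irreducible time-homogeneous Markov chain on {0,1}: there are constants p_{0,1} ∈ (0,1] and p_{1,1} ∈ [0,1) with p_{1,0} := 1 − p_{1,1} ∈ (0,1] such that for every i ∈ ℕ, P(l(i+1) = 1 ∣ 𝓕_i) = (1 − l(i))·p_{0,1} + l(i)·p_{1,1} almost surely. Set ρ := p_{0,1}/(p_{0,1} + p_{1,0}). If there exist a matrix K ∈ ℝ^{m×n}, a symmetric positive-definite matrix P ∈ ℝ^{n×n}, and scalars β ∈ (0,1) and φ ∈ [1,∞) such that (A+BK)ᵀP(A+BK) − βP is negative semidefinite, AᵀPA − φP is negative semidefinite, and (1−ρ)·ln β + ρ·ln φ < 0, then for any integer θ ≥ 1 the event-triggered closed loop defined by these data is almost surely asymptotically stable, i.e.: (i) for every ε > 0 and p̄ > 0 there exists δ > 0 such that whenever the initial state satisfies ‖x₀‖ < δ, one has P( sup_{t∈ℕ} ‖x(t)‖ > ε ) < p̄; and (ii) for every initial state x₀, P( lim_{t→∞} ‖x(t)‖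 = 0 ) = 1. -/
open MeasureTheory Filter Matrix

/-- The quadratic Lyapunov-like function `V(z) = zᵀ P z`. -/
noncomputable def lyapV {n : ℕ} (P : Matrix (Fin n) (Fin n) ℝ) (z : Fin n → ℝ) : ℝ :=
  z ⬝ᵥ P.mulVec z

/-- Sample-path description of the event-triggered closed loop. -/
def IsEventTriggeredLoop {n m : ℕ} (A : Matrix (Fin n) (Fin n) ℝ)
    (B : Matrix (Fin n) (Fin m) ℝ) (K : Matrix (Fin m) (Fin n) ℝ)
    (P : Matrix (Fin n) (Fin n) ℝ) (β : ℝ) (θ : ℕ) (l : ℕ → ℝ)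
    (x₀ : Fin n → ℝ) (τ : ℕ → ℕ) (x : ℕ → Fin n → ℝ) : Prop :=
  τ 0 = 0 ∧ x 0 = x₀ ∧
  (∀ i t, τ i ≤ t → t < τ (i + 1) →
    x (t + 1) = A.mulVec (x t) + B.mulVec ((1 - l i) • K.mulVec (x (τ i)))) ∧
  (∀ i, τ (i + 1) = sInf {t : ℕ | τ i < t ∧ (τ i + θ ≤ t ∨
    β * lyapV P (x (τ i)) <
      lyapV P (A.mulVec (x t) + B.mulVec ((1 - l i) • K.mulVec (x (τ i)))))})

/-!
Along a sample path, `V(x)` is multiplied over an inter-event interval by at most `β` when the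
packet arrives and by at most `φ` when it is lost, and never exceeds `φ` times its value at the
last event; hence `V(x t) ≤ φ · g(l 0) ⋯ g(l (i-1)) · V(x₀)` on the `i`-th interval, where
`g 0 = β` and `g 1 = φ`. The product is controlled by an exponential tilt: since the stationary
mean `(1-ρ) log β + ρ log φ` of the log-gain is negative, for small `s > 0` and a suitable weight
`W` on the current loss state the process `M i = (g(l 0) ⋯ g(l (i-1)))^s · (1 + (W-1) l i)`
satisfies `E[M (i+1) | 𝓕 i] ≤ c · M i` with `c < 1`. So `E[M i] ≤ cⁱ E[M 0]`; Markov's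
inequality and a union bound give stability in probability, and Borel–Cantelli gives almost
sure convergence.
-/

open Finset Topology

section Lyapunov

variable {n : ℕ} {P : Matrix (Fin n) (Fin n) ℝ}

lemma lyapV_nonneg (hP : P.PosSemidef) (z : Fin n → ℝ) : 0 ≤ lyapV P z := by
  simpa [lyapV] using hP.dotProduct_mulVec_nonneg z

lemma lyapV_smul (P : Matrix (Fin n) (Fin n) ℝ) (a : ℝ) (z : Fin n → ℝ) :
    lyapV P (a • z) = a ^ 2 * lyapV P z := by
  simp only [lyapV, mulVec_smul, smul_dotProduct, dotProduct_smul, smul_eq_mul]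
  ring

lemma continuous_lyapV (P : Matrix (Fin n) (Fin n) ℝ) : Continuous (lyapV P) :=
  continuous_id.dotProduct (continuous_const.matrix_mulVec continuous_id)

lemma lyapV_mulVec_le {M : Matrix (Fin n) (Fin n) ℝ} {a : ℝ} (h : (a • P - Mᵀ * P * M).PosSemidef)
    (z : Fin n → ℝ) : lyapV P (M *ᵥ z) ≤ a * lyapV P z := by
  have hquad : z ⬝ᵥ (a • P - Mᵀ * P * M) *ᵥ z = a * lyapV P z - lyapV P (M *ᵥ z) := by
    simp only [sub_mulVec, dotProduct_sub, smul_mulVec, dotProduct_smul, smul_eq_mul,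
      ← mulVec_mulVec, dotProduct_mulVec _ Mᵀ, vecMul_transpose, lyapV]
  have := h.dotProduct_mulVec_nonneg z
  rw [star_trivial, hquad] at this
  linarith

lemma exists_pos_mul_sq_norm_le_lyapV (hP : P.PosDef) :
    ∃ c > 0, ∀ z, c * ‖z‖ ^ 2 ≤ lyapV P z := by
  have hunit : ∀ z : Fin n → ℝ, z ≠ 0 → ‖z‖⁻¹ • z ∈ Metric.sphere 0 1 := fun z hz => by
    simp [norm_smul, hz]
  rcases (Metric.sphere (0 : Fin n → ℝ) 1).eq_empty_or_nonempty with hS | hS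
  · refine ⟨1, one_pos, fun z => ?_⟩
    obtain rfl : z = 0 := by
      by_contra hz
      simpa [hS] using hunit z hz
    simp [lyapV]
  obtain ⟨z₀, hz₀, hmin⟩ :=
    (isCompact_sphere (0 : Fin n → ℝ) 1).exists_isMinOn hS (continuous_lyapV P).continuousOn
  refine ⟨lyapV P z₀, hP.dotProduct_mulVec_pos (ne_zero_of_mem_unit_sphere ⟨z₀, hz₀⟩), fun z => ?_⟩
  rcases eq_or_ne z 0 with rfl | hz
  · simp [lyapV]
  have hscale : lyapV P z = ‖z‖ ^ 2 * lyapV P (‖z‖⁻¹ • z) := by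
    rw [lyapV_smul, inv_pow, mul_inv_cancel_left₀ (by positivity)]
  rw [hscale, mul_comm]
  exact mul_le_mul_of_nonneg_left (hmin (hunit z hz)) (sq_nonneg _)

lemma exists_pos_forall_norm_lt_mul_lyapV_lt (P : Matrix (Fin n) (Fin n) ℝ) (C : ℝ) {b : ℝ}
    (hb : 0 < b) : ∃ δ > 0, ∀ z, ‖z‖ < δ → C * lyapV P z < b := by
  have hcont := ((continuous_lyapV P).const_mul C).tendsto 0
  simpa [lyapV] using Metric.eventually_nhds_iff.1
    (hcont.eventually (gt_mem_nhds (by simpa [lyapV] using hb)))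

lemma tendsto_norm_zero_of_tendsto_lyapV (hP : P.PosDef) {α : Type*} {L : Filter α}
    {f : α → Fin n → ℝ} (h : Tendsto (fun a => lyapV P (f a)) L (𝓝 0)) :
    Tendsto (fun a => ‖f a‖) L (𝓝 0) := by
  obtain ⟨c, hc, hlow⟩ := exists_pos_mul_sq_norm_le_lyapV hP
  have hsq : Tendsto (fun a => ‖f a‖ ^ 2) L (𝓝 0) :=
    squeeze_zero (fun _ => sq_nonneg _) (fun a => (le_div_iff₀' hc).2 (hlow (f a)))
      (by simpa using h.div_const c)
  simpa [Real.sqrt_sq (norm_nonneg _)] using hsq.sqrt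

end Lyapunov

section Gain

variable {β φ : ℝ}

noncomputable def intervalGain (β φ r : ℝ) : ℝ := if r = 0 then β else φ

noncomputable def accumGain (β φ : ℝ) (l : ℕ → ℝ) (i : ℕ) : ℝ :=
  ∏ j ∈ range i, intervalGain β φ (l j)

lemma measurable_intervalGain (β φ : ℝ) : Measurable (intervalGain β φ) :=
  Measurable.ite (measurableSet_singleton 0) measurable_const measurable_const

lemma accumGain_succ (l : ℕ → ℝ) (i : ℕ) :
    accumGain β φ l (i + 1) = accumGain β φ l i * intervalGain β φ (l i) :=
  prod_range_succ _ _

lemma le_intervalGain (hβφ : β ≤ φ) (r : ℝ) : β ≤ intervalGain β φ r := by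
  unfold intervalGain; split_ifs <;> linarith

lemma intervalGain_le (hβφ : β ≤ φ) (r : ℝ) : intervalGain β φ r ≤ φ := by
  unfold intervalGain; split_ifs <;> linarith

lemma intervalGain_pos (hβ : 0 < β) (hβφ : β ≤ φ) (r : ℝ) : 0 < intervalGain β φ r :=
  hβ.trans_le (le_intervalGain hβφ r)

lemma accumGain_pos (hβ : 0 < β) (hβφ : β ≤ φ) (l : ℕ → ℝ) (i : ℕ) : 0 < accumGain β φ l i :=
  prod_pos fun j _ => intervalGain_pos hβ hβφ (l j)

lemma accumGain_le_pow (hβ : 0 < β) (hβφ : β ≤ φ) (l : ℕ → ℝ) (i : ℕ) :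
    accumGain β φ l i ≤ φ ^ i := by
  simpa [accumGain] using prod_le_prod (s := range i)
    (fun j _ => (intervalGain_pos hβ hβφ (l j)).le)
    (fun j _ => intervalGain_le hβφ (l j))

end Gain

lemma StrictMono.exists_le_lt_succ {τ : ℕ → ℕ} (hτ : StrictMono τ) {t : ℕ} (ht : τ 0 ≤ t) :
    ∃ i, τ i ≤ t ∧ t < τ (i + 1) := by
  have hex : ∃ i, t < τ (i + 1) := ⟨t, Nat.lt_of_lt_of_le t.lt_succ_self (hτ.id_le _)⟩
  refine ⟨Nat.find hex, ?_, Nat.find_spec hex⟩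
  rcases Nat.eq_zero_or_eq_succ_pred (Nat.find hex) with h | h
  · rwa [h]
  · rw [h]
    exact not_lt.1 (Nat.find_min hex (by omega))

lemma tendsto_zero_of_le_on_intervals {τ : ℕ → ℕ} (hτ : StrictMono τ)
    {u g : ℕ → ℝ} (hu : ∀ t, 0 ≤ u t) (hug : ∀ i t, τ i ≤ t → t < τ (i + 1) → u t ≤ g i)
    (hg : Tendsto g atTop (𝓝 0)) : Tendsto u atTop (𝓝 0) := by
  refine tendsto_order.2 ⟨fun a ha => Eventually.of_forall fun t => ha.trans_le (hu t),
    fun a ha => ?_⟩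
  obtain ⟨N, hN⟩ := eventually_atTop.1 (hg.eventually (gt_mem_nhds ha))
  refine eventually_atTop.2 ⟨τ N, fun t ht => ?_⟩
  obtain ⟨i, hit, hti⟩ := hτ.exists_le_lt_succ ((hτ.monotone N.zero_le).trans ht)
  have hNi : N ≤ i := Nat.lt_succ_iff.1 (hτ.lt_iff_lt.1 (ht.trans_lt hti))
  exact (hug i t hit hti).trans_lt (hN i hNi)

namespace IsEventTriggeredLoop

variable {n m : ℕ} {A : Matrix (Fin n) (Fin n) ℝ} {B : Matrix (Fin n) (Fin m) ℝ}
  {K : Matrix (Fin m) (Fin n) ℝ} {P : Matrix (Fin n) (Fin n) ℝ} {β φ : ℝ} {θ : ℕ} {l : ℕ → ℝ}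
  {x₀ : Fin n → ℝ} {τ : ℕ → ℕ} {x : ℕ → Fin n → ℝ}

lemma lt_succ (h : IsEventTriggeredLoop A B K P β θ l x₀ τ x) (i : ℕ) : τ i < τ (i + 1) := by
  rw [h.2.2.2 i, ← Nat.succ_le_iff]
  refine le_csInf ?_ fun t ht => ht.1
  exact ⟨τ i + θ + 1, by omega, Or.inl (by omega)⟩

lemma strictMono (h : IsEventTriggeredLoop A B K P β θ l x₀ τ x) : StrictMono τ :=
  strictMono_nat_of_lt_succ h.lt_succ

/-- Strictly inside an inter-event interval the triggering condition has not fired. -/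
lemma lyapV_succ_le (h : IsEventTriggeredLoop A B K P β θ l x₀ τ x) {i t : ℕ} (hit : τ i < t)
    (hti : t < τ (i + 1)) : lyapV P (x (t + 1)) ≤ β * lyapV P (x (τ i)) := by
  rw [h.2.2.1 i t hit.le hti]
  by_contra! hfire
  rw [h.2.2.2 i] at hti
  exact Nat.notMem_of_lt_sInf hti ⟨hit, Or.inr hfire⟩

lemma lyapV_le_intervalGain (h : IsEventTriggeredLoop A B K P β θ l x₀ τ x) (hP : P.PosSemidef)
    (hβφ : β ≤ φ) (hLMI1 : (β • P - (A + B * K)ᵀ * P * (A + B * K)).PosSemidef)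
    (hLMI2 : (φ • P - Aᵀ * P * A).PosSemidef) {i t : ℕ} (hl : l i = 0 ∨ l i = 1)
    (hit : τ i < t) (hti : t ≤ τ (i + 1)) :
    lyapV P (x t) ≤ intervalGain β φ (l i) * lyapV P (x (τ i)) := by
  obtain ⟨t, rfl⟩ : ∃ t', t = t' + 1 := ⟨t - 1, by omega⟩
  rcases Nat.lt_or_ge (τ i) t with hlt | hle
  · calc lyapV P (x (t + 1)) ≤ β * lyapV P (x (τ i)) := h.lyapV_succ_le hlt (by omega)
      _ ≤ _ := mul_le_mul_of_nonneg_right (le_intervalGain hβφ _) (lyapV_nonneg hP _)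
  obtain rfl : t = τ i := by omega
  rw [h.2.2.1 i (τ i) le_rfl (h.lt_succ i)]
  rcases hl with h0 | h1
  · simpa [h0, intervalGain, add_mulVec, mulVec_mulVec] using lyapV_mulVec_le hLMI1 (x (τ i))
  · simpa [h1, intervalGain] using lyapV_mulVec_le hLMI2 (x (τ i))

lemma lyapV_event_le_accumGain (h : IsEventTriggeredLoop A B K P β θ l x₀ τ x)
    (hP : P.PosSemidef) (hβ : 0 < β) (hβφ : β ≤ φ)
    (hLMI1 : (β • P - (A + B * K)ᵀ * P * (A + B * K)).PosSemidef)
    (hLMI2 : (φ • P - Aᵀ * P * A).PosSemidef) (hl : ∀ i, l i = 0 ∨ l i = 1) (i : ℕ) :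
    lyapV P (x (τ i)) ≤ accumGain β φ l i * lyapV P x₀ := by
  induction i with
  | zero => simp [accumGain, h.1, h.2.1]
  | succ i ih =>
    calc lyapV P (x (τ (i + 1)))
        ≤ intervalGain β φ (l i) * lyapV P (x (τ i)) :=
          h.lyapV_le_intervalGain hP hβφ hLMI1 hLMI2 (hl i) (h.lt_succ i) le_rfl
      _ ≤ intervalGain β φ (l i) * (accumGain β φ l i * lyapV P x₀) :=
          mul_le_mul_of_nonneg_left ih (intervalGain_pos hβ hβφ _).le
      _ = accumGain β φ l (i + 1) * lyapV P x₀ := by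
          rw [accumGain_succ]; ring

lemma lyapV_le_accumGain (h : IsEventTriggeredLoop A B K P β θ l x₀ τ x)
    (hP : P.PosSemidef) (hβ : 0 < β) (hβφ : β ≤ φ) (hφ : 1 ≤ φ)
    (hLMI1 : (β • P - (A + B * K)ᵀ * P * (A + B * K)).PosSemidef)
    (hLMI2 : (φ • P - Aᵀ * P * A).PosSemidef) (hl : ∀ i, l i = 0 ∨ l i = 1) {i t : ℕ}
    (hit : τ i ≤ t) (hti : t ≤ τ (i + 1)) :
    lyapV P (x t) ≤ φ * accumGain β φ l i * lyapV P x₀ := by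
  have hVi := lyapV_nonneg hP (x (τ i))
  have hinterval : lyapV P (x t) ≤ φ * lyapV P (x (τ i)) := by
    rcases hit.eq_or_lt with rfl | hlt
    · nlinarith
    · exact (h.lyapV_le_intervalGain hP hβφ hLMI1 hLMI2 (hl i) hlt hti).trans
        (mul_le_mul_of_nonneg_right (intervalGain_le hβφ _) hVi)
  calc lyapV P (x t) ≤ φ * lyapV P (x (τ i)) := hinterval
    _ ≤ φ * (accumGain β φ l i * lyapV P x₀) := mul_le_mul_of_nonneg_left
        (h.lyapV_event_le_accumGain hP hβ hβφ hLMI1 hLMI2 hl i) (by linarith)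
    _ = φ * accumGain β φ l i * lyapV P x₀ := by ring

end IsEventTriggeredLoop

lemma eventually_exp_mul_affine_lt_one {a p c : ℝ} (h : a + p * c < 0) :
    ∀ᶠ s in 𝓝[>] 0, Real.exp (a * s) * (1 - p + p * Real.exp (c * s)) < 1 := by
  set g : ℝ → ℝ := fun s => Real.exp (a * s) * (1 - p + p * Real.exp (c * s))
  have hg : HasDerivAt g (a + p * c) 0 := by
    have := ((hasDerivAt_id (0 : ℝ)).const_mul a).exp.fun_mul
      ((((hasDerivAt_id (0 : ℝ)).const_mul c).exp.const_mul p).const_add (1 - p))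
    simpa [g] using this
  have hslope := (hasDerivAt_iff_tendsto_slope.1 hg).mono_left (nhdsGT_le_nhdsNE 0)
  filter_upwards [hslope.eventually (eventually_lt_nhds h), self_mem_nhdsWithin] with s hs hs0
  have hg0 : g 0 = 1 := by simp [g]
  rw [slope_def_field, hg0, sub_zero, div_lt_iff₀ hs0] at hs
  linarith

noncomputable def nextLossProb (p01 p11 r : ℝ) : ℝ := (1 - r) * p01 + r * p11

lemma mul_add_mul_neg_of_convex_comb_neg {a b p q : ℝ} (hp : 0 < p) (hq : 0 < q)
    (h : (1 - p / (p + q)) * a + p / (p + q) * b < 0) : q * a + p * b < 0 := by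
  have hmean : (1 - p / (p + q)) * a + p / (p + q) * b = (q * a + p * b) / (p + q) := by
    field_simp
    ring
  rwa [hmean, div_lt_iff₀ (by positivity), zero_mul] at h

lemma exists_tilt_rate {a b p q : ℝ} (ha : a < 0) (hb : 0 ≤ b) (hp : 0 < p) (hq : 0 < q)
    (h : q * a + p * b < 0) : ∃ γ > 0, a + p * γ < 0 ∧ b + q * -γ < 0 := by
  refine ⟨(p * b - q * a) / (2 * p * q), div_pos (by nlinarith) (by positivity), ?_, ?_⟩
  · have : a + p * ((p * b - q * a) / (2 * p * q)) = (q * a + p * b) / (2 * q) := by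
      field_simp
      ring
    exact this ▸ div_neg_of_neg_of_pos h (by positivity)
  · have : b + q * -((p * b - q * a) / (2 * p * q)) = (q * a + p * b) / (2 * p) := by
      field_simp
      ring
    exact this ▸ div_neg_of_neg_of_pos h (by positivity)

lemma exists_tilt {β φ p01 p11 : ℝ} (hβ : β ∈ Set.Ioo (0 : ℝ) 1) (hφ : 1 ≤ φ) (hp01 : 0 < p01)
    (hp11 : p11 < 1) (hdrift : (1 - p11) * Real.log β + p01 * Real.log φ < 0) :
    ∃ s : ℝ, 0 < s ∧ ∃ W : ℝ, 1 ≤ W ∧ ∃ c : ℝ, 0 ≤ c ∧ c < 1 ∧ ∀ r : ℝ, (r = 0 ∨ r = 1) →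
      intervalGain β φ r ^ s * (1 + (W - 1) * nextLossProb p01 p11 r) ≤ c * (1 + (W - 1) * r) := by
  obtain ⟨γ, hγ, h0, h1⟩ := exists_tilt_rate (Real.log_neg hβ.1 hβ.2) (Real.log_nonneg hφ)
    hp01 (sub_pos.2 hp11) hdrift
  obtain ⟨s, hg0, hg1, hs⟩ := ((eventually_exp_mul_affine_lt_one h0).and
    ((eventually_exp_mul_affine_lt_one h1).and self_mem_nhdsWithin)).exists
  set W := Real.exp (γ * s)
  have hW : 1 ≤ W := Real.one_le_exp (by positivity)
  set g0 := Real.exp (Real.log β * s) * (1 - p01 + p01 * W)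
  set g1 := Real.exp (Real.log φ * s) * (1 - (1 - p11) + (1 - p11) * Real.exp (-γ * s))
  have hg0_nonneg : 0 ≤ g0 := mul_nonneg (Real.exp_pos _).le (by nlinarith)
  refine ⟨s, hs, W, hW, max g0 g1, le_max_of_le_left hg0_nonneg, max_lt hg0 hg1, ?_⟩
  rintro r (rfl | rfl)
  · calc intervalGain β φ 0 ^ s * (1 + (W - 1) * nextLossProb p01 p11 0) = g0 := by
          simp only [intervalGain, nextLossProb, if_pos, Real.rpow_def_of_pos hβ.1]
          ring
      _ ≤ max g0 g1 * (1 + (W - 1) * 0) := by simp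
  · have hWinv : Real.exp (-γ * s) * W = 1 := by rw [← Real.exp_add]; simp
    calc intervalGain β φ 1 ^ s * (1 + (W - 1) * nextLossProb p01 p11 1) = g1 * W := by
          simp only [intervalGain, nextLossProb, one_ne_zero, if_false,
            Real.rpow_def_of_pos (zero_lt_one.trans_le hφ)]
          linear_combination (-(Real.exp (Real.log φ * s) * (1 - p11))) * hWinv
      _ ≤ max g0 g1 * (1 + (W - 1) * 1) := by
          simpa using mul_le_mul_of_nonneg_right (le_max_right g0 g1) (zero_le_one.trans hW)

section GeometricDecay

variable {Ω : Type*} {m₀ : MeasurableSpace Ω} {μ : Measure Ω} [IsFiniteMeasure μ]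
  {M : ℕ → Ω → ℝ} {c C : ℝ}

lemma integral_le_pow_mul_of_condExp_le {ℱ : Filtration ℕ m₀} (hc : 0 ≤ c)
    (hint : ∀ i, Integrable (M i) μ) (hstep : ∀ i, μ[M (i + 1) | ℱ i] ≤ᵐ[μ] c • M i) (i : ℕ) :
    ∫ ω, M i ω ∂μ ≤ c ^ i * ∫ ω, M 0 ω ∂μ := by
  induction i with
  | zero => simp
  | succ i ih =>
    calc ∫ ω, M (i + 1) ω ∂μ = ∫ ω, (μ[M (i + 1) | ℱ i]) ω ∂μ := (integral_condExp (ℱ.le i)).symm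
      _ ≤ ∫ ω, (c • M i) ω ∂μ := integral_mono_ae integrable_condExp ((hint i).smul c) (hstep i)
      _ = c * ∫ ω, M i ω ∂μ := integral_const_mul c _
      _ ≤ c * (c ^ i * ∫ ω, M 0 ω ∂μ) := mul_le_mul_of_nonneg_left ih hc
      _ = c ^ (i + 1) * ∫ ω, M 0 ω ∂μ := by ring

lemma measure_le_le_of_integral_le_pow_mul (hM : ∀ i ω, 0 ≤ M i ω)
    (hint : ∀ i, Integrable (M i) μ) (hdecay : ∀ i, ∫ ω, M i ω ∂μ ≤ c ^ i * C) {a : ℝ}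
    (ha : 0 < a) (i : ℕ) : μ {ω | a ≤ M i ω} ≤ ENNReal.ofReal (c ^ i * C / a) := by
  rw [← ofReal_measureReal]
  refine ENNReal.ofReal_le_ofReal ((le_div_iff₀' ha).2 ?_)
  exact (mul_meas_ge_le_integral_of_nonneg (Eventually.of_forall (hM i)) (hint i) a).trans
    (hdecay i)

lemma tsum_measure_le_le_of_integral_le_pow_mul (hM : ∀ i ω, 0 ≤ M i ω)
    (hint : ∀ i, Integrable (M i) μ) (hc0 : 0 ≤ c) (hc1 : c < 1)
    (hdecay : ∀ i, ∫ ω, M i ω ∂μ ≤ c ^ i * C) {a : ℝ} (ha : 0 < a) :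
    ∑' i, μ {ω | a ≤ M i ω} ≤ ENNReal.ofReal (C / ((1 - c) * a)) := by
  have hC : 0 ≤ C := by simpa using (integral_nonneg (hM 0)).trans (hdecay 0)
  calc ∑' i, μ {ω | a ≤ M i ω} ≤ ∑' i, ENNReal.ofReal (c ^ i * (C / a)) :=
        ENNReal.tsum_le_tsum fun i => by
          simpa [mul_div_assoc] using measure_le_le_of_integral_le_pow_mul hM hint hdecay ha i
    _ = ENNReal.ofReal (∑' i, c ^ i * (C / a)) :=
        (ENNReal.ofReal_tsum_of_nonneg (fun i => by positivity)
          ((summable_geometric_of_lt_one hc0 hc1).mul_right _)).symm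
    _ = ENNReal.ofReal (C / ((1 - c) * a)) := by
        rw [tsum_mul_right, tsum_geometric_of_lt_one hc0 hc1]
        congr 1
        field_simp

lemma tendsto_measure_exists_le_of_integral_le_pow_mul (hM : ∀ i ω, 0 ≤ M i ω)
    (hint : ∀ i, Integrable (M i) μ) (hc0 : 0 ≤ c) (hc1 : c < 1)
    (hdecay : ∀ i, ∫ ω, M i ω ∂μ ≤ c ^ i * C) :
    Tendsto (fun a => μ {ω | ∃ i, a ≤ M i ω}) atTop (𝓝 0) := by
  have hbound : Tendsto (fun a => ENNReal.ofReal (C / ((1 - c) * a))) atTop (𝓝 0) := by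
    simpa using ENNReal.tendsto_ofReal
      (tendsto_const_nhds.div_atTop (tendsto_id.const_mul_atTop (sub_pos.2 hc1)))
  refine tendsto_of_tendsto_of_tendsto_of_le_of_le' tendsto_const_nhds hbound
    (Eventually.of_forall fun _ => zero_le) ?_
  filter_upwards [eventually_gt_atTop 0] with a ha
  calc μ {ω | ∃ i, a ≤ M i ω} = μ (⋃ i, {ω | a ≤ M i ω}) := by simp only [Set.ofPred_exists]
    _ ≤ ∑' i, μ {ω | a ≤ M i ω} := measure_iUnion_le _
    _ ≤ _ := tsum_measure_le_le_of_integral_le_pow_mul hM hint hc0 hc1 hdecay ha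

lemma ae_tendsto_zero_of_integral_le_pow_mul (hM : ∀ i ω, 0 ≤ M i ω)
    (hint : ∀ i, Integrable (M i) μ) (hc0 : 0 ≤ c) (hc1 : c < 1)
    (hdecay : ∀ i, ∫ ω, M i ω ∂μ ≤ c ^ i * C) :
    ∀ᵐ ω ∂μ, Tendsto (fun i => M i ω) atTop (𝓝 0) := by
  have hsmall : ∀ k : ℕ, ∀ᵐ ω ∂μ, ∀ᶠ i in atTop, ω ∉ {ω | 1 / ((k : ℝ) + 1) ≤ M i ω} :=
    fun k => ae_eventually_notMem (ne_top_of_le_ne_top ENNReal.ofReal_ne_top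
      (tsum_measure_le_le_of_integral_le_pow_mul hM hint hc0 hc1 hdecay (by positivity)))
  filter_upwards [ae_all_iff.2 hsmall] with ω hω
  refine tendsto_order.2 ⟨fun a ha => Eventually.of_forall fun i => ha.trans_le (hM i ω),
    fun a ha => ?_⟩
  obtain ⟨k, hk⟩ := exists_nat_one_div_lt ha
  filter_upwards [hω k] with i hi
  exact (not_le.1 hi).trans hk

end GeometricDecay

section MarkovLosses

variable {Ω : Type*} {m₀ : MeasurableSpace Ω} {μ : Measure Ω} [IsFiniteMeasure μ]
  {ℱ : Filtration ℕ m₀} {l : ℕ → Ω → ℝ} {β φ p01 p11 s W c : ℝ}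

/-- The weight `1 + (W - 1) r` on the current loss state plays the role of a Perron eigenvector
of the tilted transition matrix: it is what makes the process contract in conditional
expectation. -/
noncomputable def tiltedProcess (β φ s W : ℝ) (l : ℕ → Ω → ℝ) (i : ℕ) (ω : Ω) : ℝ :=
  accumGain β φ (fun j => l j ω) i ^ s * (1 + (W - 1) * l i ω)

lemma measurable_accumGain (hadapted : Adapted ℱ l) {i k : ℕ} (hik : i ≤ k + 1) :
    Measurable[ℱ k] fun ω => accumGain β φ (fun j => l j ω) i :=
  Finset.measurable_prod _ fun j hj => (measurable_intervalGain β φ).comp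
    ((hadapted j).mono (ℱ.mono (by simp at hj; omega)) le_rfl)

lemma integrable_of_zero_or_one {f : Ω → ℝ} (hf : Measurable f) (h01 : ∀ ω, f ω = 0 ∨ f ω = 1) :
    Integrable f μ :=
  Integrable.of_bound hf.aestronglyMeasurable 1 (Eventually.of_forall fun ω => by
    rcases h01 ω with h | h <;> simp [h])

lemma rpow_accumGain_le_tiltedProcess (h01 : ∀ i ω, l i ω = 0 ∨ l i ω = 1) (hβ : 0 < β)
    (hβφ : β ≤ φ) (hW : 1 ≤ W) (i : ℕ) (ω : Ω) :
    accumGain β φ (fun j => l j ω) i ^ s ≤ tiltedProcess β φ s W l i ω :=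
  le_mul_of_one_le_right (Real.rpow_nonneg (accumGain_pos hβ hβφ _ i).le s) (by
    rcases h01 i ω with h | h <;> simp [h, hW])

lemma tiltedProcess_nonneg (h01 : ∀ i ω, l i ω = 0 ∨ l i ω = 1) (hβ : 0 < β) (hβφ : β ≤ φ)
    (hW : 1 ≤ W) (i : ℕ) (ω : Ω) : 0 ≤ tiltedProcess β φ s W l i ω :=
  (Real.rpow_nonneg (accumGain_pos hβ hβφ _ i).le s).trans
    (rpow_accumGain_le_tiltedProcess h01 hβ hβφ hW i ω)

lemma integrable_tiltedProcess (h01 : ∀ i ω, l i ω = 0 ∨ l i ω = 1) (hadapted : Adapted ℱ l)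
    (hβ : 0 < β) (hβφ : β ≤ φ) (hs : 0 ≤ s) (hW : 1 ≤ W) (i : ℕ) :
    Integrable (tiltedProcess β φ s W l i) μ := by
  have hmeas : Measurable[ℱ i] (tiltedProcess β φ s W l i) :=
    ((measurable_accumGain hadapted (by omega)).pow_const s).mul
      (measurable_const.add (measurable_const.mul (hadapted i)))
  refine Integrable.of_bound (hmeas.mono (ℱ.le i) le_rfl).aestronglyMeasurable ((φ ^ i) ^ s * W)
    (Eventually.of_forall fun ω => ?_)
  have hweight : 1 ≤ 1 + (W - 1) * l i ω ∧ 1 + (W - 1) * l i ω ≤ W := by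
    rcases h01 i ω with h | h <;> simp [h, hW]
  rw [Real.norm_of_nonneg (tiltedProcess_nonneg h01 hβ hβφ hW i ω)]
  exact mul_le_mul (Real.rpow_le_rpow (accumGain_pos hβ hβφ _ i).le
    (accumGain_le_pow hβ hβφ _ i) hs) hweight.2 (zero_le_one.trans hweight.1)
    (Real.rpow_nonneg (pow_nonneg (hβ.le.trans hβφ) i) s)

lemma condExp_weight_succ (h01 : ∀ i ω, l i ω = 0 ∨ l i ω = 1) (hadapted : Adapted ℱ l)
    (hmarkov : ∀ i, μ[{ω | l (i + 1) ω = 1}.indicator (fun _ => (1 : ℝ)) | ℱ i]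
      =ᵐ[μ] fun ω => nextLossProb p01 p11 (l i ω)) (i : ℕ) :
    μ[fun ω => 1 + (W - 1) * l (i + 1) ω | ℱ i]
      =ᵐ[μ] fun ω => 1 + (W - 1) * nextLossProb p01 p11 (l i ω) := by
  have hind : l (i + 1) = {ω | l (i + 1) ω = 1}.indicator fun _ => 1 := by
    funext ω
    rcases h01 (i + 1) ω with h | h <;> simp [h]
  have hint : Integrable (l (i + 1)) μ :=
    integrable_of_zero_or_one ((hadapted (i + 1)).mono (ℱ.le _) le_rfl) (h01 (i + 1))
  have hsum := condExp_add (integrable_const (1 : ℝ)) (hint.smul (W - 1)) (ℱ i)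
  rw [condExp_const (ℱ.le i)] at hsum
  have hprob := hmarkov i
  rw [← hind] at hprob
  filter_upwards [hsum, condExp_smul (μ := μ) (W - 1) (l (i + 1)) (ℱ i), hprob]
    with ω h1 h2 h3
  simp only [Pi.add_apply, Pi.smul_apply, smul_eq_mul] at h1 h2
  rw [← h3, ← h2, ← h1]
  rfl

lemma condExp_tiltedProcess_succ_le (h01 : ∀ i ω, l i ω = 0 ∨ l i ω = 1)
    (hadapted : Adapted ℱ l)
    (hmarkov : ∀ i, μ[{ω | l (i + 1) ω = 1}.indicator (fun _ => (1 : ℝ)) | ℱ i]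
      =ᵐ[μ] fun ω => nextLossProb p01 p11 (l i ω))
    (hβ : 0 < β) (hβφ : β ≤ φ) (hs : 0 ≤ s) (hW : 1 ≤ W)
    (htilt : ∀ r : ℝ, (r = 0 ∨ r = 1) →
      intervalGain β φ r ^ s * (1 + (W - 1) * nextLossProb p01 p11 r) ≤ c * (1 + (W - 1) * r))
    (i : ℕ) :
    μ[tiltedProcess β φ s W l (i + 1) | ℱ i] ≤ᵐ[μ] c • tiltedProcess β φ s W l i := by
  set G : Ω → ℝ := fun ω => accumGain β φ (fun j => l j ω) (i + 1) ^ s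
  have hpull : μ[tiltedProcess β φ s W l (i + 1) | ℱ i]
      =ᵐ[μ] G * μ[fun ω => 1 + (W - 1) * l (i + 1) ω | ℱ i] :=
    condExp_mul_of_stronglyMeasurable_left
      ((measurable_accumGain hadapted le_rfl).pow_const s).stronglyMeasurable
      (integrable_tiltedProcess h01 hadapted hβ hβφ hs hW (i + 1))
      ((integrable_const 1).add ((integrable_of_zero_or_one
        ((hadapted (i + 1)).mono (ℱ.le _) le_rfl) (h01 (i + 1))).const_mul _))
  filter_upwards [hpull, condExp_weight_succ h01 hadapted hmarkov i] with ω h1 h2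
  have hG : 0 ≤ accumGain β φ (fun j => l j ω) i ^ s :=
    Real.rpow_nonneg (accumGain_pos hβ hβφ _ i).le s
  rw [h1, Pi.mul_apply, h2]
  calc G ω * (1 + (W - 1) * nextLossProb p01 p11 (l i ω))
      = accumGain β φ (fun j => l j ω) i ^ s *
          (intervalGain β φ (l i ω) ^ s * (1 + (W - 1) * nextLossProb p01 p11 (l i ω))) := by
        simp only [G, accumGain_succ, Real.mul_rpow (accumGain_pos hβ hβφ _ i).le
          (intervalGain_pos hβ hβφ _).le]
        ring
    _ ≤ accumGain β φ (fun j => l j ω) i ^ s * (c * (1 + (W - 1) * l i ω)) :=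
        mul_le_mul_of_nonneg_left (htilt _ (h01 i ω)) hG
    _ = (c • tiltedProcess β φ s W l i) ω := by
        simp only [Pi.smul_apply, smul_eq_mul, tiltedProcess]
        ring

lemma exists_tiltedProcess_integral_le_pow_mul (h01 : ∀ i ω, l i ω = 0 ∨ l i ω = 1)
    (hadapted : Adapted ℱ l)
    (hmarkov : ∀ i, μ[{ω | l (i + 1) ω = 1}.indicator (fun _ => (1 : ℝ)) | ℱ i]
      =ᵐ[μ] fun ω => nextLossProb p01 p11 (l i ω))
    (hp01 : 0 < p01) (hp11 : p11 < 1) (hβ : β ∈ Set.Ioo (0 : ℝ) 1) (hφ : 1 ≤ φ)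
    (hdrift : (1 - p11) * Real.log β + p01 * Real.log φ < 0) :
    ∃ s : ℝ, 0 < s ∧ ∃ W : ℝ, 1 ≤ W ∧ ∃ c : ℝ, 0 ≤ c ∧ c < 1 ∧ ∀ i,
      ∫ ω, tiltedProcess β φ s W l i ω ∂μ ≤ c ^ i * ∫ ω, tiltedProcess β φ s W l 0 ω ∂μ := by
  obtain ⟨s, hs, W, hW, c, hc0, hc1, htilt⟩ := exists_tilt hβ hφ hp01 hp11 hdrift
  have hβφ : β ≤ φ := by linarith [hβ.2]
  exact ⟨s, hs, W, hW, c, hc0, hc1, integral_le_pow_mul_of_condExp_le hc0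
    (integrable_tiltedProcess h01 hadapted hβ.1 hβφ hs.le hW)
    (condExp_tiltedProcess_succ_le h01 hadapted hmarkov hβ.1 hβφ hs.le hW htilt)⟩

lemma tendsto_measure_exists_le_accumGain (h01 : ∀ i ω, l i ω = 0 ∨ l i ω = 1)
    (hadapted : Adapted ℱ l)
    (hmarkov : ∀ i, μ[{ω | l (i + 1) ω = 1}.indicator (fun _ => (1 : ℝ)) | ℱ i]
      =ᵐ[μ] fun ω => nextLossProb p01 p11 (l i ω))
    (hp01 : 0 < p01) (hp11 : p11 < 1) (hβ : β ∈ Set.Ioo (0 : ℝ) 1) (hφ : 1 ≤ φ)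
    (hdrift : (1 - p11) * Real.log β + p01 * Real.log φ < 0) :
    Tendsto (fun R => μ {ω | ∃ i, R ≤ accumGain β φ (fun j => l j ω) i}) atTop (𝓝 0) := by
  obtain ⟨s, hs, W, hW, c, hc0, hc1, hdecay⟩ :=
    exists_tiltedProcess_integral_le_pow_mul h01 hadapted hmarkov hp01 hp11 hβ hφ hdrift
  have hβφ : β ≤ φ := by linarith [hβ.2]
  have hM := tendsto_measure_exists_le_of_integral_le_pow_mul
    (tiltedProcess_nonneg h01 hβ.1 hβφ hW) (integrable_tiltedProcess h01 hadapted hβ.1 hβφ hs.le hW)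
    hc0 hc1 hdecay
  refine tendsto_of_tendsto_of_tendsto_of_le_of_le' tendsto_const_nhds
    (hM.comp (tendsto_rpow_atTop hs)) (Eventually.of_forall fun _ => zero_le) ?_
  filter_upwards [eventually_ge_atTop 0] with R hR
  refine measure_mono fun ω ⟨i, hi⟩ => ⟨i, ?_⟩
  exact (Real.rpow_le_rpow hR hi hs.le).trans (rpow_accumGain_le_tiltedProcess h01 hβ.1 hβφ hW i ω)

lemma ae_tendsto_accumGain_zero (h01 : ∀ i ω, l i ω = 0 ∨ l i ω = 1)
    (hadapted : Adapted ℱ l)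
    (hmarkov : ∀ i, μ[{ω | l (i + 1) ω = 1}.indicator (fun _ => (1 : ℝ)) | ℱ i]
      =ᵐ[μ] fun ω => nextLossProb p01 p11 (l i ω))
    (hp01 : 0 < p01) (hp11 : p11 < 1) (hβ : β ∈ Set.Ioo (0 : ℝ) 1) (hφ : 1 ≤ φ)
    (hdrift : (1 - p11) * Real.log β + p01 * Real.log φ < 0) :
    ∀ᵐ ω ∂μ, Tendsto (fun i => accumGain β φ (fun j => l j ω) i) atTop (𝓝 0) := by
  obtain ⟨s, hs, W, hW, c, hc0, hc1, hdecay⟩ :=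
    exists_tiltedProcess_integral_le_pow_mul h01 hadapted hmarkov hp01 hp11 hβ hφ hdrift
  have hβφ : β ≤ φ := by linarith [hβ.2]
  filter_upwards [ae_tendsto_zero_of_integral_le_pow_mul (tiltedProcess_nonneg h01 hβ.1 hβφ hW)
    (integrable_tiltedProcess h01 hadapted hβ.1 hβφ hs.le hW) hc0 hc1 hdecay] with ω hω
  have hpow : Tendsto (fun i => accumGain β φ (fun j => l j ω) i ^ s) atTop (𝓝 0) :=
    squeeze_zero (fun i => Real.rpow_nonneg (accumGain_pos hβ.1 hβφ _ i).le s)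
      (rpow_accumGain_le_tiltedProcess h01 hβ.1 hβφ hW · ω) hω
  simpa [Real.zero_rpow (inv_ne_zero hs.ne'), Real.rpow_rpow_inv (accumGain_pos hβ.1 hβφ _ _).le
    hs.ne'] using hpow.rpow_const (p := s⁻¹) (Or.inr (inv_nonneg.2 hs.le))

end MarkovLosses

theorem event_triggered_stability_markov_losses_general
    {n m : ℕ} (A : Matrix (Fin n) (Fin n) ℝ) (B : Matrix (Fin n) (Fin m) ℝ)
    {Ω : Type*} [MeasurableSpace Ω] (μ : Measure Ω) [IsProbabilityMeasure μ]
    (ℱ : Filtration ℕ (inferInstance : MeasurableSpace Ω))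
    (l : ℕ → Ω → ℝ)
    (h01 : ∀ i ω, l i ω = 0 ∨ l i ω = 1)
    (hadapted : Adapted ℱ l)
    (p01 p11 : ℝ) (hp01 : p01 ∈ Set.Ioc (0 : ℝ) 1) (hp11 : p11 ∈ Set.Ico (0 : ℝ) 1)
    (hmarkov : ∀ i, (μ[Set.indicator {ω | l (i + 1) ω = 1} (fun _ => (1 : ℝ)) | ℱ i])
      =ᵐ[μ] fun ω => (1 - l i ω) * p01 + l i ω * p11)
    (K : Matrix (Fin m) (Fin n) ℝ) (P : Matrix (Fin n) (Fin n) ℝ)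
    (hP : P.PosDef)
    (β φ : ℝ) (hβ : β ∈ Set.Ioo (0 : ℝ) 1) (hφ : 1 ≤ φ)
    (hLMI1 : (β • P - (A + B * K)ᵀ * P * (A + B * K)).PosSemidef)
    (hLMI2 : (φ • P - Aᵀ * P * A).PosSemidef)
    (hrate : (1 - p01 / (p01 + (1 - p11))) * Real.log β
      + (p01 / (p01 + (1 - p11))) * Real.log φ < 0)
    (θ : ℕ) :
    (∀ ε > (0 : ℝ), ∀ pbar > (0 : ℝ), ∃ δ > (0 : ℝ),
      ∀ (x₀ : Fin n → ℝ) (τ : Ω → ℕ → ℕ) (x : Ω → ℕ → Fin n → ℝ),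
        ‖x₀‖ < δ →
        (∀ ω, IsEventTriggeredLoop A B K P β θ (fun i => l i ω) x₀ (τ ω) (x ω)) →
        μ {ω | ∃ t : ℕ, ε < ‖x ω t‖} < ENNReal.ofReal pbar) ∧
    (∀ (x₀ : Fin n → ℝ) (τ : Ω → ℕ → ℕ) (x : Ω → ℕ → Fin n → ℝ),
      (∀ ω, IsEventTriggeredLoop A B K P β θ (fun i => l i ω) x₀ (τ ω) (x ω)) →
      ∀ᵐ ω ∂μ, Tendsto (fun t : ℕ => ‖x ω t‖) atTop (nhds 0)) := by
  have hβφ : β ≤ φ := by linarith [hβ.2]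
  have hdrift := mul_add_mul_neg_of_convex_comb_neg hp01.1 (sub_pos.2 hp11.2) hrate
  refine ⟨fun ε hε pbar hpbar => ?_, fun x₀ τ x hloop => ?_⟩
  · obtain ⟨κ, hκ, hlow⟩ := exists_pos_mul_sq_norm_le_lyapV hP
    obtain ⟨R, hRμ⟩ := ((tendsto_measure_exists_le_accumGain h01 hadapted hmarkov hp01.1 hp11.2
      hβ hφ hdrift).eventually (gt_mem_nhds (ENNReal.ofReal_pos.2 hpbar))).exists
    obtain ⟨δ, hδ, hsmall⟩ :=
      exists_pos_forall_norm_lt_mul_lyapV_lt P (φ * R) (mul_pos hκ (pow_pos hε 2))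
    refine ⟨δ, hδ, fun x₀ τ x hx₀ hloop => lt_of_le_of_lt (measure_mono ?_) hRμ⟩
    rintro ω ⟨t, ht⟩
    obtain ⟨i, hit, hti⟩ := (hloop ω).strictMono.exists_le_lt_succ ((hloop ω).1 ▸ t.zero_le)
    refine ⟨i, not_lt.1 fun hlt => ?_⟩
    have hV₀ := lyapV_nonneg hP.posSemidef x₀
    refine lt_irrefl (κ * ε ^ 2) ?_
    calc κ * ε ^ 2 < κ * ‖x ω t‖ ^ 2 := by gcongr
      _ ≤ lyapV P (x ω t) := hlow _
      _ ≤ φ * accumGain β φ (fun j => l j ω) i * lyapV P x₀ :=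
          (hloop ω).lyapV_le_accumGain hP.posSemidef hβ.1 hβφ hφ hLMI1 hLMI2 (h01 · ω) hit hti.le
      _ ≤ φ * R * lyapV P x₀ := by gcongr
      _ < κ * ε ^ 2 := hsmall x₀ hx₀
  · filter_upwards [ae_tendsto_accumGain_zero h01 hadapted hmarkov hp01.1 hp11.2 hβ hφ hdrift]
      with ω hω
    refine tendsto_norm_zero_of_tendsto_lyapV hP (tendsto_zero_of_le_on_intervals
      (hloop ω).strictMono (fun t => lyapV_nonneg hP.posSemidef _)
      (fun i t hit hti => (hloop ω).lyapV_le_accumGain hP.posSemidef hβ.1 hβφ hφ hLMI1 hLMI2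
        (h01 · ω) hit hti.le) ?_)
    simpa using (hω.const_mul φ).mul_const (lyapV P x₀)

/-- Corollary 1: almost sure asymptotic stability of the
event-triggered networked control system when packet losses form an irreducible
time-homogeneous Markov chain on `{0,1}` with transition probabilities
`p₀₁, p₁₁`, with `ρ := p₀₁ / (p₀₁ + p₁₀)` and `p₁₀ := 1 − p₁₁`. -/
theorem event_triggered_stability_markov_losses
    {n m : ℕ} (A : Matrix (Fin n) (Fin n) ℝ) (B : Matrix (Fin n) (Fin m) ℝ)
    {Ω : Type*} [MeasurableSpace Ω] (μ : Measure Ω) [IsProbabilityMeasure μ]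
    (ℱ : Filtration ℕ (inferInstance : MeasurableSpace Ω))
    (l : ℕ → Ω → ℝ)
    (h01 : ∀ i ω, l i ω = 0 ∨ l i ω = 1)
    (hadapted : Adapted ℱ l)
    (p01 p11 : ℝ) (hp01 : p01 ∈ Set.Ioc (0 : ℝ) 1) (hp11 : p11 ∈ Set.Ico (0 : ℝ) 1)
    (hmarkov : ∀ i, (μ[Set.indicator {ω | l (i + 1) ω = 1} (fun _ => (1 : ℝ)) | ℱ i])
      =ᵐ[μ] fun ω => (1 - l i ω) * p01 + l i ω * p11)
    (K : Matrix (Fin m) (Fin n) ℝ) (P : Matrix (Fin n) (Fin n) ℝ)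
    (hP : P.PosDef)
    (β φ : ℝ) (hβ : β ∈ Set.Ioo (0 : ℝ) 1) (hφ : 1 ≤ φ)
    (hLMI1 : (β • P - (A + B * K)ᵀ * P * (A + B * K)).PosSemidef)
    (hLMI2 : (φ • P - Aᵀ * P * A).PosSemidef)
    (hrate : (1 - p01 / (p01 + (1 - p11))) * Real.log β
      + (p01 / (p01 + (1 - p11))) * Real.log φ < 0)
    (θ : ℕ) (hθ : 1 ≤ θ) :
    (∀ ε > (0 : ℝ), ∀ pbar > (0 : ℝ), ∃ δ > (0 : ℝ),
      ∀ (x₀ : Fin n → ℝ) (τ : Ω → ℕ → ℕ) (x : Ω → ℕ → Fin n → ℝ),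
        ‖x₀‖ < δ →
        (∀ ω, IsEventTriggeredLoop A B K P β θ (fun i => l i ω) x₀ (τ ω) (x ω)) →
        μ {ω | ∃ t : ℕ, ε < ‖x ω t‖} < ENNReal.ofReal pbar) ∧
    (∀ (x₀ : Fin n → ℝ) (τ : Ω → ℕ → ℕ) (x : Ω → ℕ → Fin n → ℝ),
      (∀ ω, IsEventTriggeredLoop A B K P β θ (fun i => l i ω) x₀ (τ ω) (x ω)) →
      ∀ᵐ ω ∂μ, Tendsto (fun t : ℕ => ‖x ω t‖) atTop (nhds 0)) :=
  event_triggered_stability_markov_losses_general A B μ ℱ l h01 hadapted p01 p11 hp01 hp11 hmarkov K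
    P hP β φ hβ hφ hLMI1 hLMI2 hrate θ
end

section
/- Let A ∈ ℝ^{n×n}, B ∈ ℝ^{n×m}, K ∈ ℝ^{m×n}, and let l be a {0,1}-valued stochastic process with partial sums L(k) = ∑_{t=0}^{k-1} l(t) satisfying liminf_{k→∞} L(k)/k ≥ σ almost surely, where σ ∈ [0,1]. Consider the closed-loop state process defined sample-path-wise by x(0) = x₀ ∈ ℝⁿ with x₀ ≠ 0 and x(t+1) = (A + (1 − l(t))·B·K)·x(t) for t ∈ ℕ (packet exchanges attempted at every time instant). If there exist a symmetric positive-definite matrix P̂ ∈ ℝ^{n×n} and scalars β̂ ∈ (0,1) and φ̂ ∈ [1,∞) such that (A+BK)ᵀP̂(A+BK) − β̂·P̂ is positive semidefinite, AᵀP̂A − φ̂·P̂ is positive semidefinite, and (1−σ)·ln β̂ + σ·ln φ̂ > 0, then P( lim_{t→∞} ‖x(t)‖ = ∞ ) = 1. -/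
/-!
Along every sample path the quadratic form `V t = x tᵀ P̂ x t` satisfies `V (t+1) ≥ β̂ V t` in a
step without packet failure and `V (t+1) ≥ φ̂ V t` in a step with one, so
`log V k ≥ log V 0 + (k - L k) ln β̂ + L k ln φ̂`. Since `ln β̂ ≤ ln φ̂`, the bound
`liminf L k / k ≥ σ` makes the right-hand side grow at least linearly in `k` whenever
`(1 - σ) ln β̂ + σ ln φ̂ > 0`, and `V t ≤ C ‖x t‖²` turns `V t → ∞` into `‖x t‖ → ∞`.
-/

open MeasureTheory Filter Matrix Finset Topology

section QuadraticForm

variable {ι : Type*} [Fintype ι]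

lemma mul_dotProduct_mulVec_le_of_posSemidef {P M : Matrix ι ι ℝ} {c : ℝ}
    (h : (Mᵀ * P * M - c • P).PosSemidef) (v : ι → ℝ) :
    c * (v ⬝ᵥ P *ᵥ v) ≤ (M *ᵥ v) ⬝ᵥ P *ᵥ (M *ᵥ v) := by
  have hv := h.dotProduct_mulVec_nonneg v
  rw [star_trivial, sub_mulVec, dotProduct_sub, smul_mulVec, dotProduct_smul, smul_eq_mul,
    ← mulVec_mulVec, ← mulVec_mulVec, dotProduct_mulVec v, vecMul_transpose] at hv
  linarith

lemma dotProduct_mulVec_le_sum_abs_mul_norm_sq (P : Matrix ι ι ℝ) (v : ι → ℝ) :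
    v ⬝ᵥ P *ᵥ v ≤ (∑ i, ∑ j, |P i j|) * ‖v‖ ^ 2 := by
  have hv : ∀ i, |v i| ≤ ‖v‖ := fun i => by simpa using norm_le_pi_norm v i
  calc v ⬝ᵥ P *ᵥ v = ∑ i, ∑ j, v i * P i j * v j := by
        simp [dotProduct, mulVec, Finset.mul_sum, mul_assoc]
    _ ≤ ∑ i, ∑ j, |P i j| * ‖v‖ ^ 2 := by
        refine sum_le_sum fun i _ => sum_le_sum fun j _ => ?_
        calc v i * P i j * v j ≤ |v i * P i j * v j| := le_abs_self _
          _ = |P i j| * (|v i| * |v j|) := by rw [abs_mul, abs_mul]; ring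
          _ ≤ |P i j| * (‖v‖ * ‖v‖) := by gcongr <;> exact hv _
          _ = |P i j| * ‖v‖ ^ 2 := by ring
    _ = (∑ i, ∑ j, |P i j|) * ‖v‖ ^ 2 := by simp_rw [Finset.sum_mul]

lemma tendsto_norm_atTop_of_tendsto_dotProduct_mulVec {α : Type*} {f : Filter α}
    (P : Matrix ι ι ℝ) {v : α → ι → ℝ} (h : Tendsto (fun a => v a ⬝ᵥ P *ᵥ v a) f atTop) :
    Tendsto (fun a => ‖v a‖) f atTop := by
  have hC : 0 < ∑ i, ∑ j, |P i j| + 1 := by positivity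
  have hsq : Tendsto (fun a => ‖v a‖ ^ 2) f atTop := by
    refine tendsto_atTop_mono (fun a => ?_) (h.atTop_div_const hC)
    rw [div_le_iff₀ hC, mul_comm]
    exact (dotProduct_mulVec_le_sum_abs_mul_norm_sq P (v a)).trans
      (by gcongr; linarith)
  exact (Real.tendsto_sqrt_atTop.comp hsq).congr fun a => Real.sqrt_sq (norm_nonneg _)

end QuadraticForm

lemma prod_range_mul_le_of_mul_le {R : Type*} [CommSemiring R] [PartialOrder R]
    [IsOrderedRing R] {c V : ℕ → R} (hc : ∀ t, 0 ≤ c t) (h : ∀ t, c t * V t ≤ V (t + 1))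
    (k : ℕ) : (∏ t ∈ range k, c t) * V 0 ≤ V k := by
  induction k with
  | zero => simp
  | succ k ih =>
    calc (∏ t ∈ range (k + 1), c t) * V 0 = c k * ((∏ t ∈ range k, c t) * V 0) := by
          rw [prod_range_succ]; ring
      _ ≤ c k * V k := mul_le_mul_of_nonneg_left ih (hc k)
      _ ≤ V (k + 1) := h k

lemma tendsto_sum_atTop_of_le_liminf {u : ℕ → ℝ} (hu : ∀ t, 0 ≤ u t) {a b σ : ℝ} (hab : a ≤ b)
    (hσ : σ ≤ liminf (fun k : ℕ => (∑ t ∈ range k, u t) / k) atTop)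
    (hpos : 0 < (1 - σ) * a + σ * b) :
    Tendsto (fun k : ℕ => ∑ t ∈ range k, ((1 - u t) * a + u t * b)) atTop atTop := by
  obtain ⟨σ', hσ', hpos'⟩ : ∃ σ' < σ, 0 < (1 - σ') * a + σ' * b := by
    have hcont : Tendsto (fun s => (1 - s) * a + s * b) (𝓝[<] σ) (𝓝 ((1 - σ) * a + σ * b)) :=
      ((by fun_prop : Continuous fun s : ℝ => (1 - s) * a + s * b).tendsto σ).mono_left
        nhdsWithin_le_nhds
    exact ((hcont.eventually_const_lt hpos).and self_mem_nhdsWithin).exists.imp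
      fun s hs => ⟨hs.2, hs.1⟩
  have hbdd : IsBoundedUnder (· ≥ ·) atTop fun k : ℕ => (∑ t ∈ range k, u t) / k :=
    isBoundedUnder_of ⟨0, fun k => div_nonneg (sum_nonneg fun t _ => hu t) k.cast_nonneg⟩
  refine tendsto_atTop_mono' _ ?_ (tendsto_natCast_atTop_atTop.atTop_mul_const hpos')
  filter_upwards [eventually_lt_of_lt_liminf (hσ'.trans_le hσ) hbdd, eventually_gt_atTop 0]
    with k hk hk0
  have hL : σ' * k ≤ ∑ t ∈ range k, u t := ((lt_div_iff₀ (by exact_mod_cast hk0)).1 hk).le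
  have hsum : ∑ t ∈ range k, ((1 - u t) * a + u t * b) =
      k * a + (∑ t ∈ range k, u t) * (b - a) := by
    simp only [sum_add_distrib, sub_mul, sum_sub_distrib, ← sum_mul, one_mul, sum_const,
      card_range, nsmul_eq_mul]
    ring
  rw [hsum]
  linarith [mul_le_mul_of_nonneg_right hL (sub_nonneg.2 hab)]

theorem closed_loop_almost_sure_instability_general
    {n m : ℕ} (A : Matrix (Fin n) (Fin n) ℝ) (B : Matrix (Fin n) (Fin m) ℝ)
    (K : Matrix (Fin m) (Fin n) ℝ)
    {Ω : Type*} [MeasurableSpace Ω] (μ : Measure Ω) [IsProbabilityMeasure μ]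
    (l : ℕ → Ω → ℝ)
    (h01 : ∀ t ω, l t ω = 0 ∨ l t ω = 1)
    (σ : ℝ)
    (hlim : ∀ᵐ ω ∂μ,
      σ ≤ liminf (fun k : ℕ => (∑ t ∈ Finset.range k, l t ω) / k) atTop)
    (x₀ : Fin n → ℝ) (hx₀ : x₀ ≠ 0)
    (x : Ω → ℕ → Fin n → ℝ)
    (hx0 : ∀ ω, x ω 0 = x₀)
    (hdyn : ∀ ω t, x ω (t + 1) = (A + (1 - l t ω) • (B * K)).mulVec (x ω t))
    (Phat : Matrix (Fin n) (Fin n) ℝ) (hPhat : Phat.PosDef)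
    (βhat φhat : ℝ) (hβhat : βhat ∈ Set.Ioo (0 : ℝ) 1) (hφhat : 1 ≤ φhat)
    (hLMI1 : ((A + B * K)ᵀ * Phat * (A + B * K) - βhat • Phat).PosSemidef)
    (hLMI2 : (Aᵀ * Phat * A - φhat • Phat).PosSemidef)
    (hrate : 0 < (1 - σ) * Real.log βhat + σ * Real.log φhat) :
    ∀ᵐ ω ∂μ, Tendsto (fun t : ℕ => ‖x ω t‖) atTop atTop := by
  have hlog_le : Real.log βhat ≤ Real.log φhat :=
    Real.log_le_log hβhat.1 (hβhat.2.le.trans hφhat)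
  filter_upwards [hlim] with ω hω
  set c : ℕ → ℝ := fun t => (1 - l t ω) * βhat + l t ω * φhat
  have hc_pos : ∀ t, 0 < c t := fun t => by
    rcases h01 t ω with h | h <;> simp [c, h] <;> linarith [hβhat.1]
  have hstep : ∀ t, c t * (x ω t ⬝ᵥ Phat *ᵥ x ω t) ≤ x ω (t + 1) ⬝ᵥ Phat *ᵥ x ω (t + 1) := by
    intro t
    rcases h01 t ω with h | h
    · simpa [c, hdyn, h] using mul_dotProduct_mulVec_le_of_posSemidef hLMI1 (x ω t)
    · simpa [c, hdyn, h] using mul_dotProduct_mulVec_le_of_posSemidef hLMI2 (x ω t)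
  have hprod : Tendsto (fun k => ∏ t ∈ range k, c t) atTop atTop := by
    have hl_nonneg : ∀ t, 0 ≤ l t ω := fun t => by rcases h01 t ω with h | h <;> simp [h]
    have hexp_log : ∀ t, Real.exp ((1 - l t ω) * Real.log βhat + l t ω * Real.log φhat) = c t :=
      fun t => by
        rcases h01 t ω with h | h <;>
          simp [c, h, Real.exp_log hβhat.1, Real.exp_log (zero_lt_one.trans_le hφhat)]
    refine (Real.tendsto_exp_atTop.comp (tendsto_sum_atTop_of_le_liminf hl_nonneg hlog_le hω
      hrate)).congr fun k => ?_
    simp only [Function.comp_apply, Real.exp_sum, hexp_log]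
  have hV0 : 0 < x ω 0 ⬝ᵥ Phat *ᵥ x ω 0 := hx0 ω ▸ hPhat.dotProduct_mulVec_pos hx₀
  exact tendsto_norm_atTop_of_tendsto_dotProduct_mulVec Phat <| tendsto_atTop_mono
    (prod_range_mul_le_of_mul_le (fun t => (hc_pos t).le) hstep) (hprod.atTop_mul_const hV0)

/-- Theorem 2, attacker's perspective: if the long-run ratio of
packet failures is at least `σ` almost surely and the reverse Lyapunov matrix
inequalities together with `(1−σ)·ln β̂ + σ·ln φ̂ > 0` hold, then the state of
the closed-loop system (packet exchanges attempted at every time instant)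
diverges almost surely. -/
theorem closed_loop_almost_sure_instability
    {n m : ℕ} (A : Matrix (Fin n) (Fin n) ℝ) (B : Matrix (Fin n) (Fin m) ℝ)
    (K : Matrix (Fin m) (Fin n) ℝ)
    {Ω : Type*} [MeasurableSpace Ω] (μ : Measure Ω) [IsProbabilityMeasure μ]
    (l : ℕ → Ω → ℝ)
    (h01 : ∀ t ω, l t ω = 0 ∨ l t ω = 1)
    (σ : ℝ) (hσ : σ ∈ Set.Icc (0 : ℝ) 1)
    (hlim : ∀ᵐ ω ∂μ,
      σ ≤ liminf (fun k : ℕ => (∑ t ∈ Finset.range k, l t ω) / k) atTop)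
    (x₀ : Fin n → ℝ) (hx₀ : x₀ ≠ 0)
    (x : Ω → ℕ → Fin n → ℝ)
    (hx0 : ∀ ω, x ω 0 = x₀)
    (hdyn : ∀ ω t, x ω (t + 1) = (A + (1 - l t ω) • (B * K)).mulVec (x ω t))
    (Phat : Matrix (Fin n) (Fin n) ℝ) (hPhat : Phat.PosDef)
    (βhat φhat : ℝ) (hβhat : βhat ∈ Set.Ioo (0 : ℝ) 1) (hφhat : 1 ≤ φhat)
    (hLMI1 : ((A + B * K)ᵀ * Phat * (A + B * K) - βhat • Phat).PosSemidef)
    (hLMI2 : (Aᵀ * Phat * A - φhat • Phat).PosSemidef)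
    (hrate : 0 < (1 - σ) * Real.log βhat + σ * Real.log φhat) :
    ∀ᵐ ω ∂μ, Tendsto (fun t : ℕ => ‖x ω t‖) atTop atTop :=
  closed_loop_almost_sure_instability_general A B K μ l h01 σ hlim x₀ hx₀ x hx0 hdyn Phat hPhat βhat
    φhat hβhat hφhat hLMI1 hLMI2 hrate
end

section
/- Let p₀ ∈ (0,1) and σ_M ∈ (0,1). Let l_R be a {0,1}-valued process adapted to the filtration (𝓕_t) such that for every t ∈ ℕ, P(l_R(t+1) = 0 ∣ 𝓕_t) ≤ p₀ almost surely, and let l_M be a {0,1}-valued process (not necessarily independent of l_R) with ∑_{k=1}^∞ P( ∑_{t=0}^{k-1} l_M(t) < σ_M · k ) < ∞. Define the overall loss process l(t) = l_R(t) + (1 − l_R(t))·l_M(t) and L(k) = ∑_{t=0}^{k-1} l(t). Then for every σ ∈ (0, max{1 − p₀, σ_M}), the series ∑_{k=1}^∞ P( L(k) < σ·k ) is finite. -/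
/-!
The loss `l = l_R + (1 - l_R) l_M` dominates both `l_R` and `l_M`, so for `σ < σ_M` the claim is
inherited from `l_M`, and for `σ < 1 - p₀` it reduces to a Chernoff bound for `l_R`. For the
latter put `q = 1 - σ > p₀` and pick `θ > 0` with `c := 1 + (e^θ - 1) p₀ < e^{θ q}`. Each factor
`e^{θ (1 - l_R t)}` has conditional expectation at most `c` given the past, so the tower property
gives `E ∏_{t ≤ k} e^{θ (1 - l_R t)} ≤ c^k e^θ`, while on the event `L_R(k+1) < σ (k+1)` this
product exceeds `e^{θ q k}`. Markov's inequality then bounds the probabilities by a convergent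
geometric series.
-/

open MeasureTheory Filter Topology Finset

theorem exists_pos_one_add_mul_lt_exp_mul {p q : ℝ} (hpq : p < q) :
    ∃ θ > 0, 1 + (Real.exp θ - 1) * p < Real.exp (θ * q) := by
  have hF : HasDerivAt (fun θ => Real.exp (θ * q) - (1 + (Real.exp θ - 1) * p)) (q - p) 0 := by
    simpa using (hasDerivAt_mul_const q).exp.fun_sub
      ((((Real.hasDerivAt_exp 0).sub_const 1).mul_const p).const_add 1)
  obtain ⟨θ, hθF, hθ⟩ := ((hF.tendsto_slope_zero_right.eventually
    (eventually_gt_nhds (sub_pos.2 hpq))).and self_mem_nhdsWithin).exists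
  refine ⟨θ, hθ, ?_⟩
  simp only [zero_add, zero_mul, Real.exp_zero, sub_self, smul_eq_mul] at hθF
  linarith [pos_of_mul_pos_right hθF (inv_nonneg.2 hθ.le)]

section

variable {Ω : Type*} {m0 : MeasurableSpace Ω} {μ : Measure Ω}

theorem integrable_finset_prod_of_norm_le [IsFiniteMeasure μ] {ι : Type*} (s : Finset ι)
    {g : ι → Ω → ℝ} {B : ℝ} (hgm : ∀ i ∈ s, AEStronglyMeasurable (g i) μ)
    (hgB : ∀ i ∈ s, ∀ ω, ‖g i ω‖ ≤ B) :
    Integrable (fun ω => ∏ i ∈ s, g i ω) μ := by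
  refine Integrable.of_bound (by simpa only [← Finset.prod_apply] using
    Finset.aestronglyMeasurable_prod s hgm) (B ^ s.card) (ae_of_all _ fun ω => ?_)
  rw [norm_prod, ← prod_const]
  exact prod_le_prod (fun _ _ => norm_nonneg _) fun i hi => hgB i hi ω

theorem condExp_one_add_mul_indicator_le [IsFiniteMeasure μ] {m : MeasurableSpace Ω}
    (hm : m ≤ m0) {s : Set Ω} (hs : MeasurableSet[m0] s) {a p : ℝ} (ha : 0 ≤ a)
    (hp : μ[s.indicator (fun _ => (1 : ℝ)) | m] ≤ᵐ[μ] fun _ => p) :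
    μ[fun ω => 1 + a * s.indicator (fun _ => (1 : ℝ)) ω | m] ≤ᵐ[μ] fun _ => 1 + a * p := by
  have hind : Integrable (s.indicator fun _ => (1 : ℝ)) μ := (integrable_const 1).indicator hs
  change μ[(fun _ => (1 : ℝ)) + a • s.indicator (fun _ => (1 : ℝ)) | m] ≤ᵐ[μ] _
  filter_upwards [condExp_add (integrable_const (1 : ℝ)) (hind.smul a) m,
    condExp_smul (m := m) (μ := μ) a (s.indicator fun _ => (1 : ℝ)), hp] with ω h₁ h₂ h₃
  rw [h₁, Pi.add_apply, h₂, condExp_const hm, Pi.smul_apply, smul_eq_mul]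
  gcongr

theorem integral_prod_range_succ_le [IsFiniteMeasure μ] {ℱ : Filtration ℕ m0}
    {g : ℕ → Ω → ℝ} {B c : ℝ} (hg : Adapted ℱ g) (hg0 : ∀ t ω, 0 ≤ g t ω)
    (hgB : ∀ t ω, g t ω ≤ B) (hc : 0 ≤ c) (hcond : ∀ t, μ[g (t + 1) | ℱ t] ≤ᵐ[μ] fun _ => c)
    (n : ℕ) : ∫ ω, ∏ t ∈ range (n + 1), g t ω ∂μ ≤ c ^ n * ∫ ω, g 0 ω ∂μ := by
  have hint : ∀ s : Finset ℕ, Integrable (fun ω => ∏ t ∈ s, g t ω) μ := fun s =>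
    integrable_finset_prod_of_norm_le s
      (fun t _ => ((hg t).mono (ℱ.le t) le_rfl).aestronglyMeasurable)
      fun t _ ω => (Real.norm_of_nonneg (hg0 t ω)).trans_le (hgB t ω)
  induction n with
  | zero => simp
  | succ n ih =>
    set F : Ω → ℝ := fun ω => ∏ t ∈ range (n + 1), g t ω
    have hF : StronglyMeasurable[ℱ n] F := by
      refine (Finset.measurable_fun_prod _ fun t ht => ?_).stronglyMeasurable
      exact (hg t).mono (ℱ.mono (Nat.lt_succ_iff.1 (mem_range.1 ht))) le_rfl
    have hFg : F * g (n + 1) = fun ω => ∏ t ∈ range (n + 2), g t ω := by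
      ext ω; simp [F, prod_range_succ _ (n + 1)]
    have hpull : μ[F * g (n + 1) | ℱ n] =ᵐ[μ] F * μ[g (n + 1) | ℱ n] :=
      condExp_mul_of_stronglyMeasurable_left hF (hFg ▸ hint _)
        (by simpa using hint {n + 1})
    calc ∫ ω, ∏ t ∈ range (n + 2), g t ω ∂μ = ∫ ω, (μ[F * g (n + 1) | ℱ n]) ω ∂μ := by
          rw [integral_condExp (ℱ.le n), hFg]
      _ = ∫ ω, F ω * (μ[g (n + 1) | ℱ n]) ω ∂μ := integral_congr_ae hpull
      _ ≤ ∫ ω, c * F ω ∂μ := by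
          refine integral_mono_ae (integrable_condExp.congr hpull) ((hint _).const_mul c) ?_
          filter_upwards [hcond n] with ω hω
          rw [mul_comm c]
          exact mul_le_mul_of_nonneg_left hω (prod_nonneg fun t _ => hg0 t ω)
      _ = c * ∫ ω, F ω ∂μ := integral_const_mul c F
      _ ≤ c ^ (n + 1) * ∫ ω, g 0 ω ∂μ := by
          rw [pow_succ', mul_assoc]
          exact mul_le_mul_of_nonneg_left ih hc

theorem tsum_measure_pow_le_lt_top [IsFiniteMeasure μ] {f : ℕ → Ω → ℝ} {A r b : ℝ}
    (hf0 : ∀ n, 0 ≤ᵐ[μ] f n) (hfi : ∀ n, Integrable (f n) μ) (hr : 0 ≤ r) (hrb : r < b)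
    (hint : ∀ n, ∫ ω, f n ω ∂μ ≤ r ^ n * A) :
    ∑' n, μ {ω | b ^ n ≤ f n ω} < ⊤ := by
  have hb : 0 < b := hr.trans_lt hrb
  have hA : 0 ≤ A := by simpa using (integral_nonneg_of_ae (hf0 0)).trans (hint 0)
  have hmarkov : ∀ n, μ.real {ω | b ^ n ≤ f n ω} ≤ A * (r / b) ^ n := fun n => by
    rw [div_pow, mul_div_assoc', le_div_iff₀ (by positivity), mul_comm, mul_comm A]
    exact (mul_meas_ge_le_integral_of_nonneg (hf0 n) (hfi n) _).trans (hint n)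
  have hsum : Summable fun n => A * (r / b) ^ n :=
    (summable_geometric_of_lt_one (div_nonneg hr hb.le) ((div_lt_one hb).2 hrb)).mul_left A
  calc ∑' n, μ {ω | b ^ n ≤ f n ω} ≤ ∑' n, ENNReal.ofReal (A * (r / b) ^ n) :=
        ENNReal.tsum_le_tsum fun n => by
          rw [← ofReal_measureReal]
          exact ENNReal.ofReal_le_ofReal (hmarkov n)
    _ = ENNReal.ofReal (∑' n, A * (r / b) ^ n) :=
        (ENNReal.ofReal_tsum_of_nonneg (fun n => by positivity) hsum).symm
    _ < ⊤ := ENNReal.ofReal_lt_top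

theorem tsum_measure_sum_range_lt_mono {X Y : ℕ → Ω → ℝ} (hXY : ∀ t ω, X t ω ≤ Y t ω)
    {σ τ : ℝ} (hστ : σ ≤ τ) :
    ∑' k : ℕ, μ {ω | ∑ t ∈ range (k + 1), Y t ω < σ * (k + 1 : ℕ)} ≤
      ∑' k : ℕ, μ {ω | ∑ t ∈ range (k + 1), X t ω < τ * (k + 1 : ℕ)} :=
  ENNReal.tsum_le_tsum fun _ => measure_mono fun ω hω =>
    (sum_le_sum fun t _ => hXY t ω).trans_lt (hω.trans_le (by gcongr))

theorem tsum_measure_sum_range_lt_lt_top_of_condExp_indicator_le [IsProbabilityMeasure μ]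
    {ℱ : Filtration ℕ m0} {X : ℕ → Ω → ℝ} (hX01 : ∀ t ω, X t ω = 0 ∨ X t ω = 1)
    (hX : Adapted ℱ X) {p σ : ℝ} (hp : 0 ≤ p)
    (hcond : ∀ t, μ[{ω | X (t + 1) ω = 0}.indicator (fun _ => (1 : ℝ)) | ℱ t]
      ≤ᵐ[μ] fun _ => p)
    (hσ : σ < 1 - p) :
    ∑' k : ℕ, μ {ω | ∑ t ∈ range (k + 1), X t ω < σ * (k + 1 : ℕ)} < ⊤ := by
  obtain ⟨θ, hθ, hc⟩ := exists_pos_one_add_mul_lt_exp_mul (show p < 1 - σ by linarith)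
  set g : ℕ → Ω → ℝ := fun t ω => Real.exp (θ * (1 - X t ω))
  have hexp : 0 ≤ Real.exp θ - 1 := by linarith [Real.add_one_le_exp θ]
  have hc0 : 0 ≤ 1 + (Real.exp θ - 1) * p := add_nonneg zero_le_one (mul_nonneg hexp hp)
  have hX0 : ∀ t ω, 0 ≤ X t ω := fun t ω => by rcases hX01 t ω with h | h <;> simp [h]
  have hg : Adapted ℱ g := fun t => (((hX t).const_sub 1).const_mul θ).exp
  have hgθ : ∀ t ω, g t ω ≤ Real.exp θ := fun t ω =>
    Real.exp_le_exp.2 (by nlinarith [hX0 t ω])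
  have hg_indicator : ∀ t, g t = fun ω =>
      1 + (Real.exp θ - 1) * {ω | X t ω = 0}.indicator (fun _ => (1 : ℝ)) ω := fun t => by
    ext ω; rcases hX01 t ω with h | h <;> simp [g, h]
  have hcond_g : ∀ t, μ[g (t + 1) | ℱ t] ≤ᵐ[μ] fun _ => 1 + (Real.exp θ - 1) * p := fun t => by
    rw [hg_indicator]
    exact condExp_one_add_mul_indicator_le (ℱ.le t)
      (ℱ.le _ _ (hX (t + 1) (measurableSet_singleton 0))) hexp (hcond t)
  have hsub : ∀ k, {ω | ∑ t ∈ range (k + 1), X t ω < σ * (k + 1 : ℕ)} ⊆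
      {ω | Real.exp (θ * (1 - σ)) ^ k ≤ ∏ t ∈ range (k + 1), g t ω} := by
    intro k ω hω
    simp only [Set.mem_ofPred_eq, g, ← Real.exp_sum, ← mul_sum, ← Real.exp_nat_mul,
      Real.exp_le_exp, sum_sub_distrib, sum_const, card_range, nsmul_eq_mul] at hω ⊢
    push_cast at hω ⊢
    nlinarith
  have hint : ∀ k, Integrable (fun ω => ∏ t ∈ range (k + 1), g t ω) μ := fun k =>
    integrable_finset_prod_of_norm_le _
      (fun t _ => ((hg t).mono (ℱ.le t) le_rfl).aestronglyMeasurable)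
      fun t _ ω => (Real.norm_of_nonneg (Real.exp_pos _).le).trans_le (hgθ t ω)
  exact (ENNReal.tsum_le_tsum fun k => measure_mono (hsub k)).trans_lt
    (tsum_measure_pow_le_lt_top
      (fun k => ae_of_all _ fun ω => prod_nonneg fun t _ => (Real.exp_pos _).le) hint hc0 hc
      (integral_prod_range_succ_le hg (fun t ω => (Real.exp_pos _).le) hgθ hc0 hcond_g))

end

theorem combined_dependent_loss_lower_tail_summable_general
    {Ω : Type*} [MeasurableSpace Ω] (μ : Measure Ω) [IsProbabilityMeasure μ]
    (ℱ : Filtration ℕ (inferInstance : MeasurableSpace Ω))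
    (p₀ : ℝ) (hp₀ : p₀ ∈ Set.Ioo (0 : ℝ) 1)
    (σM : ℝ)
    (lR lM : ℕ → Ω → ℝ)
    (hR01 : ∀ t ω, lR t ω = 0 ∨ lR t ω = 1)
    (hM01 : ∀ t ω, lM t ω = 0 ∨ lM t ω = 1)
    (hadapted : Adapted ℱ lR)
    (hcond0 : ∀ t, (μ[Set.indicator {ω | lR (t + 1) ω = 0} (fun _ => (1 : ℝ)) | ℱ t])
      ≤ᵐ[μ] fun _ => p₀)
    (hMsum : (∑' k : ℕ,
      μ {ω | (∑ t ∈ Finset.range (k + 1), lM t ω) < σM * (k + 1 : ℕ)}) < ⊤)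
    (l : ℕ → Ω → ℝ)
    (hl : ∀ t ω, l t ω = lR t ω + (1 - lR t ω) * lM t ω)
    (σ : ℝ) (hσ : σ ∈ Set.Ioo (0 : ℝ) (max (1 - p₀) σM)) :
    (∑' k : ℕ,
      μ {ω | (∑ t ∈ Finset.range (k + 1), l t ω) < σ * (k + 1 : ℕ)}) < ⊤ := by
  have hl_ge : ∀ t ω, lR t ω ≤ l t ω ∧ lM t ω ≤ l t ω := fun t ω => by
    rw [hl]
    rcases hR01 t ω with h | h <;> rcases hM01 t ω with h' | h' <;> norm_num [h, h']
  rcases lt_max_iff.mp hσ.2 with hR | hM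
  · exact (tsum_measure_sum_range_lt_mono (fun t ω => (hl_ge t ω).1) le_rfl).trans_lt
      (tsum_measure_sum_range_lt_lt_top_of_condExp_indicator_le hR01 hadapted hp₀.1.le hcond0 hR)
  · exact (tsum_measure_sum_range_lt_mono (fun t ω => (hl_ge t ω).2) hM.le).trans_lt hMsum

/-- Proposition 4: possibly dependent random losses and malicious
attacks, lower-tail version. The overall loss process satisfies
`∑ₖ P(L(k) < σ k) < ∞` for every `σ ∈ (0, max{1 − p₀, σ_M})`. -/
theorem combined_dependent_loss_lower_tail_summable
    {Ω : Type*} [MeasurableSpace Ω] (μ : Measure Ω) [IsProbabilityMeasure μ]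
    (ℱ : Filtration ℕ (inferInstance : MeasurableSpace Ω))
    (p₀ : ℝ) (hp₀ : p₀ ∈ Set.Ioo (0 : ℝ) 1)
    (σM : ℝ) (hσM : σM ∈ Set.Ioo (0 : ℝ) 1)
    (lR lM : ℕ → Ω → ℝ)
    (hR01 : ∀ t ω, lR t ω = 0 ∨ lR t ω = 1)
    (hM01 : ∀ t ω, lM t ω = 0 ∨ lM t ω = 1)
    (hadapted : Adapted ℱ lR)
    (hcond0 : ∀ t, (μ[Set.indicator {ω | lR (t + 1) ω = 0} (fun _ => (1 : ℝ)) | ℱ t])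
      ≤ᵐ[μ] fun _ => p₀)
    (hMsum : (∑' k : ℕ,
      μ {ω | (∑ t ∈ Finset.range (k + 1), lM t ω) < σM * (k + 1 : ℕ)}) < ⊤)
    (l : ℕ → Ω → ℝ)
    (hl : ∀ t ω, l t ω = lR t ω + (1 - lR t ω) * lM t ω)
    (σ : ℝ) (hσ : σ ∈ Set.Ioo (0 : ℝ) (max (1 - p₀) σM)) :
    (∑' k : ℕ,
      μ {ω | (∑ t ∈ Finset.range (k + 1), l t ω) < σ * (k + 1 : ℕ)}) < ⊤ :=
  combined_dependent_loss_lower_tail_summable_general μ ℱ p₀ hp₀ σM lR lM hR01 hM01 hadapted hcond0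
    hMsum l hl σ hσ
end

section
/- Let p₀ ∈ (0,1) and σ_M ∈ (0,1) with 1 − p₀ + σ_M ≤ 1. Let l_R be a {0,1}-valued process adapted to the filtration (𝓕_t) such that for every t ∈ ℕ, P(l_R(t+1) = 0 ∣ 𝓕_t) ≤ p₀ almost surely, and let l_M be a {0,1}-valued process with ∑_{k=1}^∞ P( ∑_{t=0}^{k-1} l_M(t) < σ_M · k ) < ∞ and such that l_R(t)·l_M(t) = 0 for all t ∈ ℕ almost surely (malicious attacks never coincide with random losses). Define the overall loss process l(t) = l_R(t) + (1 − l_R(t))·l_M(t) (so here l(t) = l_R(t) + l_M(t)) and L(k) = ∑_{t=0}^{k-1} l(t). Then for every σ ∈ (0, 1 − p₀ + σ_M), the series ∑_{k=1}^∞ P( L(k) < σ·k ) is finite. -/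
/-!
Write `q = 1 - p₀`. Since `l_R` is `{0,1}`-valued, the hypothesis on `P(l_R(t+1) = 0 | 𝓕_t)` says
`E[l_R(t+1) | 𝓕_t] ≥ q`, and the centred increments `Z_t = E[l_R(t+1) | 𝓕_t] - l_R(t+1)` are
martingale differences bounded by `1`. Expanding `(S_k + Z_k)^4` for the partial sums `S_k` and
killing the odd term by the martingale property gives `E[S_k^4] ≤ 4k²`, so by Markov's inequality
`P(S_k ≥ εk) = O(1/k²)` is summable. A shortfall `∑_{t≤k} l_R(t) < c(k+1)` with `c < q` forces
such a deviation of `S_k`, hence has summable probabilities. Finally, disjointness makes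
`l = l_R + l_M` almost surely, and `L(k) < σk` forces `∑ l_R < (σ - σ_M)k` or `∑ l_M < σ_M k`,
where `σ - σ_M < q`.
-/

open MeasureTheory Filter

section

variable {Ω : Type*} {mΩ : MeasurableSpace Ω} {μ : Measure Ω}

theorem integral_mul_eq_zero_of_condExp_eq_zero {m : MeasurableSpace Ω} (hm : m ≤ mΩ)
    [SigmaFinite (μ.trim hm)] {f g : Ω → ℝ} (hf : StronglyMeasurable[m] f)
    (hfg : Integrable (f * g) μ) (hg : Integrable g μ) (hg0 : μ[g | m] =ᵐ[μ] 0) :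
    ∫ ω, f ω * g ω ∂μ = 0 := calc
  ∫ ω, f ω * g ω ∂μ = ∫ ω, (μ[f * g | m]) ω ∂μ := (integral_condExp hm).symm
  _ = ∫ ω, (f * μ[g | m]) ω ∂μ :=
    integral_congr_ae (condExp_mul_of_stronglyMeasurable_left hf hfg hg)
  _ = 0 := integral_eq_zero_of_ae (by filter_upwards [hg0] with ω h; simp [h])

theorem condExp_condExp_sub_ae_eq_zero {m : MeasurableSpace Ω} (hm : m ≤ mΩ)
    [SigmaFinite (μ.trim hm)] {f : Ω → ℝ} (hf : Integrable f μ) : μ[μ[f | m] - f | m] =ᵐ[μ] 0 := by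
  filter_upwards [condExp_sub integrable_condExp hf m] with ω hω
  rw [hω, condExp_of_stronglyMeasurable hm stronglyMeasurable_condExp integrable_condExp,
    Pi.sub_apply, sub_self, Pi.zero_apply]

theorem one_sub_le_condExp_of_condExp_indicator_le [IsFiniteMeasure μ]
    {m : MeasurableSpace Ω} (hm : m ≤ mΩ) {f : Ω → ℝ}
    (hf : AEStronglyMeasurable[mΩ] f μ) (hf01 : ∀ ω, f ω = 0 ∨ f ω = 1) {p : ℝ}
    (h : μ[{ω | f ω = 0}.indicator (fun _ => (1 : ℝ)) | m] ≤ᵐ[μ] fun _ => p) :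
    (fun _ => 1 - p) ≤ᵐ[μ] μ[f | m] := by
  have hind : {ω | f ω = 0}.indicator (fun _ => (1 : ℝ)) = (fun _ => (1 : ℝ)) - f := by
    funext ω
    rcases hf01 ω with h | h <;> simp [h]
  have hfint : Integrable f μ :=
    .of_bound hf 1 (ae_of_all _ fun ω => by rcases hf01 ω with h | h <;> simp [h])
  rw [hind] at h
  filter_upwards [h, condExp_sub (integrable_const 1) hfint m] with ω h1 h2
  rw [h2, condExp_const hm, Pi.sub_apply] at h1
  linarith

theorem ae_condExp_mem_Icc [IsFiniteMeasure μ] {m : MeasurableSpace Ω} (hm : m ≤ mΩ)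
    {f : Ω → ℝ} (hf : Integrable f μ) {a b : ℝ} (hab : ∀ᵐ ω ∂μ, f ω ∈ Set.Icc a b) :
    ∀ᵐ ω ∂μ, μ[f | m] ω ∈ Set.Icc a b := by
  have ha := condExp_mono (m := m) (integrable_const a) hf
    (by filter_upwards [hab] with ω h using h.1)
  have hb := condExp_mono (m := m) hf (integrable_const b)
    (by filter_upwards [hab] with ω h using h.2)
  rw [condExp_const hm] at ha hb
  filter_upwards [ha, hb] with ω ha hb using ⟨ha, hb⟩

theorem integrable_pow_of_abs_le [IsFiniteMeasure μ] {f : Ω → ℝ} {C : ℝ}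
    (hf : AEStronglyMeasurable f μ) (hfC : ∀ᵐ ω ∂μ, |f ω| ≤ C) (k : ℕ) :
    Integrable (fun ω => f ω ^ k) μ :=
  .of_bound (hf.pow k) (C ^ k) (by
    filter_upwards [hfC] with ω h
    rw [norm_pow, Real.norm_eq_abs]
    exact pow_le_pow_left₀ (abs_nonneg _) h k)

section IncrementMoments

variable {m : MeasurableSpace Ω} (hm : m ≤ mΩ) {X Y : Ω → ℝ} {C : ℝ}
  (hX : StronglyMeasurable[m] X) (hXC : ∀ᵐ ω ∂μ, |X ω| ≤ C)
  (hY : AEStronglyMeasurable[mΩ] Y μ) (hY1 : ∀ᵐ ω ∂μ, |Y ω| ≤ 1) (hY0 : μ[Y | m] =ᵐ[μ] 0)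
include hm hX hXC hY hY1 hY0

theorem integral_pow_mul_eq_zero [IsFiniteMeasure μ] (k : ℕ) : ∫ ω, X ω ^ k * Y ω ∂μ = 0 := by
  have hY1' : ∀ᵐ ω ∂μ, ‖Y ω‖ ≤ 1 := by simpa only [Real.norm_eq_abs] using hY1
  refine integral_mul_eq_zero_of_condExp_eq_zero hm (hX.pow k)
    ((integrable_pow_of_abs_le (hX.mono hm).aestronglyMeasurable hXC k).mul_bdd hY hY1')
    (.of_bound hY 1 hY1') hY0

theorem integral_add_sq_le [IsProbabilityMeasure μ] :
    ∫ ω, (X ω + Y ω) ^ 2 ∂μ ≤ ∫ ω, X ω ^ 2 ∂μ + 1 := by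
  have hXm : AEStronglyMeasurable[mΩ] X μ := (hX.mono hm).aestronglyMeasurable
  have hY1' : ∀ᵐ ω ∂μ, ‖Y ω‖ ≤ 1 := by simpa only [Real.norm_eq_abs] using hY1
  have hX2 := integrable_pow_of_abs_le hXm hXC 2
  have hXY := ((integrable_pow_of_abs_le hXm hXC 1).mul_bdd hY hY1').const_mul 2
  calc ∫ ω, (X ω + Y ω) ^ 2 ∂μ ≤ ∫ ω, (X ω ^ 2 + 2 * (X ω ^ 1 * Y ω) + 1) ∂μ := by
        refine integral_mono_of_nonneg (ae_of_all _ fun ω => sq_nonneg _)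
          ((hX2.add hXY).add (integrable_const 1)) ?_
        filter_upwards [hY1] with ω h
        nlinarith [abs_le.mp h]
    _ = ∫ ω, X ω ^ 2 ∂μ + 1 := by
        rw [integral_add (hX2.fun_add hXY) (integrable_const 1), integral_add hX2 hXY,
          integral_const_mul, integral_pow_mul_eq_zero hm hX hXC hY hY1 hY0]
        simp

theorem integral_add_pow_four_le [IsProbabilityMeasure μ] :
    ∫ ω, (X ω + Y ω) ^ 4 ∂μ ≤ ∫ ω, X ω ^ 4 ∂μ + 8 * ∫ ω, X ω ^ 2 ∂μ + 3 := by
  have hXm : AEStronglyMeasurable[mΩ] X μ := (hX.mono hm).aestronglyMeasurable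
  have hY1' : ∀ᵐ ω ∂μ, ‖Y ω‖ ≤ 1 := by simpa only [Real.norm_eq_abs] using hY1
  have hX4 := integrable_pow_of_abs_le hXm hXC 4
  have hX2 := (integrable_pow_of_abs_le hXm hXC 2).const_mul 8
  have hXY := ((integrable_pow_of_abs_le hXm hXC 3).mul_bdd hY hY1').const_mul 4
  calc ∫ ω, (X ω + Y ω) ^ 4 ∂μ
        ≤ ∫ ω, (X ω ^ 4 + 4 * (X ω ^ 3 * Y ω) + 8 * X ω ^ 2 + 3) ∂μ := by
        refine integral_mono_of_nonneg (ae_of_all _ fun ω => by positivity)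
          (((hX4.add hXY).add hX2).add (integrable_const 3)) ?_
        filter_upwards [hY1] with ω h
        have hY2 : Y ω ^ 2 ≤ 1 := by nlinarith [abs_le.mp h]
        nlinarith [sq_nonneg (X ω - Y ω), sq_nonneg (X ω * Y ω), sq_nonneg (X ω + Y ω),
          mul_nonneg (sq_nonneg (Y ω)) (sq_nonneg (X ω - Y ω))]
    _ = ∫ ω, X ω ^ 4 ∂μ + 8 * ∫ ω, X ω ^ 2 ∂μ + 3 := by
        rw [integral_add ((hX4.fun_add hXY).fun_add hX2) (integrable_const 3),
          integral_add (hX4.fun_add hXY) hX2, integral_add hX4 hXY, integral_const_mul,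
          integral_const_mul, integral_pow_mul_eq_zero hm hX hXC hY hY1 hY0]
        simp

end IncrementMoments

section MartingaleDifference

open Finset

variable {ℱ : Filtration ℕ mΩ} {Z : ℕ → Ω → ℝ}

theorem stronglyMeasurable_sum_range (hZ : ∀ t, StronglyMeasurable[ℱ (t + 1)] (Z t)) (n : ℕ) :
    StronglyMeasurable[ℱ n] fun ω => ∑ t ∈ range n, Z t ω :=
  Finset.stronglyMeasurable_fun_sum _ fun t ht =>
    (hZ t).mono (ℱ.mono (Finset.mem_range.mp ht))

theorem ae_abs_sum_range_le (hZ1 : ∀ t, ∀ᵐ ω ∂μ, |Z t ω| ≤ 1) (n : ℕ) :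
    ∀ᵐ ω ∂μ, |∑ t ∈ range n, Z t ω| ≤ n := by
  filter_upwards [ae_all_iff.mpr hZ1] with ω hω
  calc |∑ t ∈ range n, Z t ω| ≤ ∑ t ∈ range n, |Z t ω| := abs_sum_le_sum_abs _ _
    _ ≤ ∑ _t ∈ range n, (1 : ℝ) := sum_le_sum fun t _ => hω t
    _ = n := by simp

variable [IsProbabilityMeasure μ] (hZ : ∀ t, StronglyMeasurable[ℱ (t + 1)] (Z t))
  (hZ1 : ∀ t, ∀ᵐ ω ∂μ, |Z t ω| ≤ 1) (hZ0 : ∀ t, μ[Z t | ℱ t] =ᵐ[μ] 0)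
include hZ hZ1 hZ0

theorem integral_sum_range_sq_le (n : ℕ) : ∫ ω, (∑ t ∈ range n, Z t ω) ^ 2 ∂μ ≤ n := by
  induction n with
  | zero => simp
  | succ n ih =>
    simp only [sum_range_succ]
    have := integral_add_sq_le (ℱ.le n) (stronglyMeasurable_sum_range hZ n)
      (ae_abs_sum_range_le hZ1 n) ((hZ n).mono (ℱ.le _)).aestronglyMeasurable (hZ1 n) (hZ0 n)
    push_cast
    linarith

theorem integral_sum_range_pow_four_le (n : ℕ) :
    ∫ ω, (∑ t ∈ range n, Z t ω) ^ 4 ∂μ ≤ 4 * n ^ 2 := by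
  induction n with
  | zero => simp
  | succ n ih =>
    simp only [sum_range_succ]
    have := integral_add_pow_four_le (ℱ.le n) (stronglyMeasurable_sum_range hZ n)
      (ae_abs_sum_range_le hZ1 n) ((hZ n).mono (ℱ.le _)).aestronglyMeasurable (hZ1 n) (hZ0 n)
    have := integral_sum_range_sq_le hZ hZ1 hZ0 n
    push_cast
    nlinarith

theorem measureReal_sum_range_ge_le {a : ℝ} (ha : 0 < a) (n : ℕ) :
    μ.real {ω | a ≤ ∑ t ∈ range n, Z t ω} ≤ 4 * n ^ 2 / a ^ 4 := by
  set S := fun ω => ∑ t ∈ range n, Z t ω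
  have hS4 : Integrable (fun ω => S ω ^ 4) μ :=
    integrable_pow_of_abs_le
      ((stronglyMeasurable_sum_range hZ n).mono (ℱ.le n)).aestronglyMeasurable
      (ae_abs_sum_range_le hZ1 n) 4
  rw [le_div_iff₀ (by positivity), mul_comm]
  calc a ^ 4 * μ.real {ω | a ≤ S ω} ≤ a ^ 4 * μ.real {ω | a ^ 4 ≤ S ω ^ 4} := by
        refine mul_le_mul_of_nonneg_left (measureReal_mono ?_) (by positivity)
        exact fun ω (h : a ≤ S ω) => pow_le_pow_left₀ ha.le h 4
    _ ≤ ∫ ω, S ω ^ 4 ∂μ :=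
        mul_meas_ge_le_integral_of_nonneg (ae_of_all _ fun ω => by positivity) hS4 _
    _ ≤ 4 * n ^ 2 := integral_sum_range_pow_four_le hZ hZ1 hZ0 n

end MartingaleDifference

section LowerTail

open Finset

variable (μ) in
/-- `∑_{k ≥ 1} P(∑_{t<k} X t < a k) < ∞`, with the series re-indexed from `k = 0`. -/
def HasSummableLowerTail (X : ℕ → Ω → ℝ) (a : ℝ) : Prop :=
  ∑' k : ℕ, μ {ω | ∑ t ∈ range (k + 1), X t ω < a * (k + 1 : ℕ)} < ⊤

theorem tsum_measure_lt_top_of_summable_measureReal [IsFiniteMeasure μ] {ι : Type*}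
    {s : ι → Set Ω} (h : Summable fun i => μ.real (s i)) : ∑' i, μ (s i) < ⊤ := by
  calc ∑' i, μ (s i) = ∑' i, ENNReal.ofReal (μ.real (s i)) :=
        tsum_congr fun i => (ofReal_measureReal (measure_ne_top μ _)).symm
    _ = ENNReal.ofReal (∑' i, μ.real (s i)) :=
        (ENNReal.ofReal_tsum_of_nonneg (fun _ => measureReal_nonneg) h).symm
    _ < ⊤ := ENNReal.ofReal_lt_top

theorem HasSummableLowerTail.add {X Y : ℕ → Ω → ℝ} {a b : ℝ} (hX : HasSummableLowerTail μ X a)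
    (hY : HasSummableLowerTail μ Y b) : HasSummableLowerTail μ (X + Y) (a + b) := by
  have hsub : ∀ k : ℕ, {ω | ∑ t ∈ range (k + 1), (X + Y) t ω < (a + b) * (k + 1 : ℕ)} ⊆
      {ω | ∑ t ∈ range (k + 1), X t ω < a * (k + 1 : ℕ)} ∪
        {ω | ∑ t ∈ range (k + 1), Y t ω < b * (k + 1 : ℕ)} := by
    intro k ω hω
    by_contra h
    simp only [Set.mem_union, Set.mem_ofPred_eq, not_or, not_lt] at h hω
    simp only [Pi.add_apply, sum_add_distrib] at hω
    linarith
  calc _ ≤ ∑' k : ℕ, (μ {ω | ∑ t ∈ range (k + 1), X t ω < a * (k + 1 : ℕ)} +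
          μ {ω | ∑ t ∈ range (k + 1), Y t ω < b * (k + 1 : ℕ)}) :=
        ENNReal.tsum_le_tsum fun k => (measure_mono (hsub k)).trans (measure_union_le _ _)
    _ < ⊤ := by rw [ENNReal.tsum_add]; exact ENNReal.add_lt_top.mpr ⟨hX, hY⟩

theorem HasSummableLowerTail.congr_ae {X Y : ℕ → Ω → ℝ} {a : ℝ}
    (hX : HasSummableLowerTail μ X a) (h : ∀ᵐ ω ∂μ, ∀ t, X t ω = Y t ω) :
    HasSummableLowerTail μ Y a := by
  refine lt_of_eq_of_lt (tsum_congr fun k => measure_congr ?_) hX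
  filter_upwards [h] with ω hω
  show (_ < _) = (_ < _)
  rw [sum_congr rfl fun t _ => hω t]

variable [IsProbabilityMeasure μ] {ℱ : Filtration ℕ mΩ} {Y : ℕ → Ω → ℝ} {q : ℝ}

theorem measureReal_sum_range_lt_le (hY : Adapted ℱ Y)
    (hY01 : ∀ t ω, Y t ω ∈ Set.Icc (0 : ℝ) 1) (hq : ∀ t, (fun _ => q) ≤ᵐ[μ] μ[Y (t + 1) | ℱ t])
    {c : ℝ} {k : ℕ} (hk : 0 < (q - c) * k - c) :
    μ.real {ω | ∑ t ∈ range (k + 1), Y t ω < c * (k + 1 : ℕ)} ≤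
      4 * k ^ 2 / ((q - c) * k - c) ^ 4 := by
  have hYint : ∀ t, Integrable (Y t) μ := fun t =>
    .of_mem_Icc 0 1 ((hY t).mono (ℱ.le t) le_rfl).aemeasurable (ae_of_all _ (hY01 t))
  have hCE : ∀ t, ∀ᵐ ω ∂μ, μ[Y (t + 1) | ℱ t] ω ∈ Set.Icc (0 : ℝ) 1 := fun t =>
    ae_condExp_mem_Icc (ℱ.le t) (hYint (t + 1)) (ae_of_all _ (hY01 (t + 1)))
  set Z : ℕ → Ω → ℝ := fun t => μ[Y (t + 1) | ℱ t] - Y (t + 1)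
  have hZ : ∀ t, StronglyMeasurable[ℱ (t + 1)] (Z t) := fun t =>
    (stronglyMeasurable_condExp.mono (ℱ.mono t.le_succ)).sub (hY (t + 1)).stronglyMeasurable
  have hZ1 : ∀ t, ∀ᵐ ω ∂μ, |Z t ω| ≤ 1 := fun t => by
    filter_upwards [hCE t] with ω hω
    rw [abs_le]
    constructor <;> simp only [Z, Pi.sub_apply] <;>
      linarith [hω.1, hω.2, (hY01 (t + 1) ω).1, (hY01 (t + 1) ω).2]
  have hZ0 : ∀ t, μ[Z t | ℱ t] =ᵐ[μ] 0 := fun t =>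
    condExp_condExp_sub_ae_eq_zero (ℱ.le t) (hYint (t + 1))
  refine (ENNReal.toReal_mono (measure_ne_top μ _) (measure_mono_ae ?_)).trans
    (measureReal_sum_range_ge_le hZ hZ1 hZ0 hk k)
  filter_upwards [ae_all_iff.mpr hq] with ω hω (hlt : ∑ t ∈ range (k + 1), Y t ω < c * _)
  show (q - c) * k - c ≤ ∑ t ∈ range k, (μ[Y (t + 1) | ℱ t] ω - Y (t + 1) ω)
  have hqk : q * k ≤ ∑ t ∈ range k, μ[Y (t + 1) | ℱ t] ω := by
    simpa [mul_comm] using sum_le_sum fun t (_ : t ∈ range k) => hω t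
  rw [sum_range_succ'] at hlt
  rw [sum_sub_distrib]
  push_cast at hlt
  linarith [(hY01 0 ω).1]

theorem hasSummableLowerTail_of_le_condExp (hY : Adapted ℱ Y)
    (hY01 : ∀ t ω, Y t ω ∈ Set.Icc (0 : ℝ) 1) (hq : ∀ t, (fun _ => q) ≤ᵐ[μ] μ[Y (t + 1) | ℱ t])
    {c : ℝ} (hc : c < q) : HasSummableLowerTail μ Y c := by
  have hη : 0 < q - c := sub_pos.2 hc
  refine tsum_measure_lt_top_of_summable_measureReal (.of_norm_bounded_eventually
    ((Real.summable_one_div_nat_pow.2 one_lt_two).mul_left (64 / (q - c) ^ 4)) ?_)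
  rw [Nat.cofinite_eq_atTop]
  filter_upwards [tendsto_natCast_atTop_atTop.eventually_ge_atTop (max (2 * c / (q - c)) 1)]
    with k hk
  have hk1 : (1 : ℝ) ≤ k := le_of_max_le_right hk
  have hck : c ≤ (q - c) * k / 2 := by
    have := le_of_max_le_left hk
    rw [div_le_iff₀ hη] at this
    linarith
  rw [Real.norm_of_nonneg measureReal_nonneg]
  calc _ ≤ 4 * k ^ 2 / ((q - c) * k - c) ^ 4 :=
        measureReal_sum_range_lt_le hY hY01 hq (by nlinarith)
    _ ≤ 4 * k ^ 2 / ((q - c) * k / 2) ^ 4 := by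
        gcongr
        linarith
    _ = 64 / (q - c) ^ 4 * (1 / k ^ 2) := by
        field_simp
        ring

end LowerTail

end

theorem combined_disjoint_loss_lower_tail_summable_general
    {Ω : Type*} [MeasurableSpace Ω] (μ : Measure Ω) [IsProbabilityMeasure μ]
    (ℱ : Filtration ℕ (inferInstance : MeasurableSpace Ω))
    (p₀ : ℝ)
    (σM : ℝ)
    (lR lM : ℕ → Ω → ℝ)
    (hR01 : ∀ t ω, lR t ω = 0 ∨ lR t ω = 1)
    (hadapted : Adapted ℱ lR)
    (hcond0 : ∀ t, (μ[Set.indicator {ω | lR (t + 1) ω = 0} (fun _ => (1 : ℝ)) | ℱ t])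
      ≤ᵐ[μ] fun _ => p₀)
    (hMsum : (∑' k : ℕ,
      μ {ω | (∑ t ∈ Finset.range (k + 1), lM t ω) < σM * (k + 1 : ℕ)}) < ⊤)
    (hdisj : ∀ᵐ ω ∂μ, ∀ t : ℕ, lR t ω * lM t ω = 0)
    (l : ℕ → Ω → ℝ)
    (hl : ∀ t ω, l t ω = lR t ω + (1 - lR t ω) * lM t ω)
    (σ : ℝ) (hσ : σ ∈ Set.Ioo (0 : ℝ) (1 - p₀ + σM)) :
    (∑' k : ℕ,
      μ {ω | (∑ t ∈ Finset.range (k + 1), l t ω) < σ * (k + 1 : ℕ)}) < ⊤ := by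
  have hR : HasSummableLowerTail μ lR (σ - σM) :=
    hasSummableLowerTail_of_le_condExp hadapted
      (fun t ω => by rcases hR01 t ω with h | h <;> simp [h])
      (fun t => one_sub_le_condExp_of_condExp_indicator_le (ℱ.le t)
        ((hadapted (t + 1)).mono (ℱ.le _) le_rfl).aestronglyMeasurable (hR01 (t + 1)) (hcond0 t))
      (by linarith [hσ.2])
  have hsum : ∀ᵐ ω ∂μ, ∀ t, (lR + lM) t ω = l t ω := by
    filter_upwards [hdisj] with ω hω t
    rw [hl, Pi.add_apply, Pi.add_apply]
    linear_combination hω t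
  simpa only [HasSummableLowerTail, sub_add_cancel] using (hR.add hMsum).congr_ae hsum

/-- Proposition 5: random losses and non-coinciding malicious
attacks (`l_R(t)·l_M(t) = 0` a.s.). If `1 − p₀ + σ_M ≤ 1`, the overall loss
process satisfies `∑ₖ P(L(k) < σ k) < ∞` for every `σ ∈ (0, 1 − p₀ + σ_M)`. -/
theorem combined_disjoint_loss_lower_tail_summable
    {Ω : Type*} [MeasurableSpace Ω] (μ : Measure Ω) [IsProbabilityMeasure μ]
    (ℱ : Filtration ℕ (inferInstance : MeasurableSpace Ω))
    (p₀ : ℝ) (hp₀ : p₀ ∈ Set.Ioo (0 : ℝ) 1)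
    (σM : ℝ) (hσM : σM ∈ Set.Ioo (0 : ℝ) 1)
    (hle : 1 - p₀ + σM ≤ 1)
    (lR lM : ℕ → Ω → ℝ)
    (hR01 : ∀ t ω, lR t ω = 0 ∨ lR t ω = 1)
    (hM01 : ∀ t ω, lM t ω = 0 ∨ lM t ω = 1)
    (hadapted : Adapted ℱ lR)
    (hcond0 : ∀ t, (μ[Set.indicator {ω | lR (t + 1) ω = 0} (fun _ => (1 : ℝ)) | ℱ t])
      ≤ᵐ[μ] fun _ => p₀)
    (hMsum : (∑' k : ℕ,
      μ {ω | (∑ t ∈ Finset.range (k + 1), lM t ω) < σM * (k + 1 : ℕ)}) < ⊤)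
    (hdisj : ∀ᵐ ω ∂μ, ∀ t : ℕ, lR t ω * lM t ω = 0)
    (l : ℕ → Ω → ℝ)
    (hl : ∀ t ω, l t ω = lR t ω + (1 - lR t ω) * lM t ω)
    (σ : ℝ) (hσ : σ ∈ Set.Ioo (0 : ℝ) (1 - p₀ + σM)) :
    (∑' k : ℕ,
      μ {ω | (∑ t ∈ Finset.range (k + 1), l t ω) < σ * (k + 1 : ℕ)}) < ⊤ :=
  combined_disjoint_loss_lower_tail_summable_general μ ℱ p₀ σM lR lM hR01 hadapted hcond0 hMsum
    hdisj l hl σ hσ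
end

section
/- Let p̃ ∈ [0,1] and φ > 1 be real numbers. Let ξ be a {0,1}-valued process adapted to the filtration (𝓕_i) such that for every i ∈ ℕ, P(ξ(i+1) = 1 ∣ 𝓕_i) ≤ p̃ almost surely. Then for every s ≥ 1 and every strictly increasing finite sequence of indices 0 ≤ i₁ < i₂ < ⋯ < i_s in ℕ, the expectation satisfies E[ φ^{ ∑_{j=1}^{s} ξ(i_j) } ] ≤ φ · ( (φ−1)·p̃ + 1 )^{s−1}. -/
/-!
On `{0,1}` one has `φ ^ x = 1 + (φ - 1) x`, so the hypothesis on `P(ξ(k+1) = 1 ∣ 𝓕_k)` bounds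
`E[φ ^ ξ(k+1) ∣ 𝓕_k]` by `c = (φ - 1) p̃ + 1`. Writing the last index as `i_s = k + 1`, the
factor `φ ^ (ξ(i_1) + ⋯ + ξ(i_{s-1}))` is bounded and `𝓕_k`-measurable, so pulling it out of
the conditional expectation gives `E[φ ^ ∑_{j ≤ s} ξ(i_j)] ≤ c · E[φ ^ ∑_{j < s} ξ(i_j)]`;
the induction starts from `φ ^ ξ(i_1) ≤ φ`.
-/

open MeasureTheory Filter

section

variable {Ω : Type*} {m m₀ : MeasurableSpace Ω} {μ : Measure Ω}

lemma rpow_eq_smul_indicator_add_one (φ : ℝ) {X : Ω → ℝ} (hX : ∀ ω, X ω = 0 ∨ X ω = 1) :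
    (fun ω ↦ φ ^ X ω) = (φ - 1) • {ω | X ω = 1}.indicator (fun _ ↦ (1 : ℝ)) + fun _ ↦ 1 := by
  funext ω
  rcases hX ω with h | h <;> simp [h]

lemma condExp_rpow_le_of_condExp_indicator_le [IsFiniteMeasure μ] (hm : m ≤ m₀) {φ p : ℝ}
    (hφ : 1 ≤ φ) {X : Ω → ℝ} (hX : Measurable X) (hX01 : ∀ ω, X ω = 0 ∨ X ω = 1)
    (hcond : μ[{ω | X ω = 1}.indicator (fun _ ↦ (1 : ℝ)) | m] ≤ᵐ[μ] fun _ ↦ p) :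
    μ[fun ω ↦ φ ^ X ω | m] ≤ᵐ[μ] fun _ ↦ (φ - 1) * p + 1 := by
  have hind : Integrable ({ω | X ω = 1}.indicator (fun _ ↦ (1 : ℝ))) μ :=
    (integrable_const 1).indicator (hX (measurableSet_singleton 1))
  rw [rpow_eq_smul_indicator_add_one φ hX01]
  filter_upwards [condExp_add (hind.smul (φ - 1)) (integrable_const 1) m,
    condExp_smul (μ := μ) (φ - 1) ({ω | X ω = 1}.indicator (fun _ ↦ (1 : ℝ))) m, hcond]
    with ω hadd hsmul hp
  rw [hadd, Pi.add_apply, hsmul, condExp_const hm]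
  simp only [Pi.smul_apply, smul_eq_mul]
  gcongr

lemma integral_mul_le_of_condExp_le_s15 [IsFiniteMeasure μ] (hm : m ≤ m₀) {F Y : Ω → ℝ} {C c : ℝ}
    (hF : StronglyMeasurable[m] F) (hF0 : ∀ ω, 0 ≤ F ω) (hFC : ∀ ω, F ω ≤ C)
    (hY : Integrable Y μ) (hYc : μ[Y | m] ≤ᵐ[μ] fun _ ↦ c) :
    ∫ ω, F ω * Y ω ∂μ ≤ c * ∫ ω, F ω ∂μ := by
  have hF' : AEStronglyMeasurable F μ := (hF.mono hm).aestronglyMeasurable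
  have hFbdd : ∀ᵐ ω ∂μ, ‖F ω‖ ≤ C := ae_of_all _ fun ω ↦ by
    rw [Real.norm_of_nonneg (hF0 ω)]; exact hFC ω
  have hFY : Integrable (F * Y) μ := hY.bdd_mul hF' hFbdd
  calc ∫ ω, F ω * Y ω ∂μ = ∫ ω, (μ[F * Y | m]) ω ∂μ := (integral_condExp hm).symm
    _ = ∫ ω, F ω * (μ[Y | m]) ω ∂μ :=
      integral_congr_ae (condExp_mul_of_stronglyMeasurable_left hF hFY hY)
    _ ≤ ∫ ω, F ω * c ∂μ := by
      refine integral_mono_ae (integrable_condExp.bdd_mul hF' hFbdd)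
        ((integrable_const C).mono' hF' hFbdd |>.mul_const c) ?_
      filter_upwards [hYc] with ω hω
      exact mul_le_mul_of_nonneg_left hω (hF0 ω)
    _ = c * ∫ ω, F ω ∂μ := by rw [integral_mul_const, mul_comm]

lemma rpow_sum_le_pow {ι : Type*} (s : Finset ι) {φ : ℝ} (hφ : 1 ≤ φ) {x : ι → ℝ}
    (hx : ∀ i ∈ s, x i ≤ 1) : φ ^ (∑ i ∈ s, x i) ≤ φ ^ s.card := by
  rw [← Real.rpow_natCast]
  refine Real.rpow_le_rpow_of_exponent_le hφ ?_
  simpa using Finset.sum_le_card_nsmul s x 1 hx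

lemma integrable_rpow_of_le_one [IsFiniteMeasure μ] {φ : ℝ} (hφ : 1 ≤ φ) {X : Ω → ℝ}
    (hX : Measurable X) (hX1 : ∀ ω, X ω ≤ 1) : Integrable (fun ω ↦ φ ^ X ω) μ := by
  refine .of_bound (measurable_const.pow hX).aestronglyMeasurable φ (ae_of_all _ fun ω ↦ ?_)
  rw [Real.norm_of_nonneg (Real.rpow_nonneg (by linarith) _)]
  simpa using Real.rpow_le_rpow_of_exponent_le hφ (hX1 ω)

variable [IsProbabilityMeasure μ] {ℱ : Filtration ℕ m₀} {ξ : ℕ → Ω → ℝ} {φ p : ℝ}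

theorem integral_rpow_sum_le (hφ : 1 ≤ φ) (hp : 0 ≤ p) (hξ01 : ∀ i ω, ξ i ω = 0 ∨ ξ i ω = 1)
    (hadapted : Adapted ℱ ξ)
    (hcond : ∀ i, μ[{ω | ξ (i + 1) ω = 1}.indicator (fun _ ↦ (1 : ℝ)) | ℱ i]
      ≤ᵐ[μ] fun _ ↦ p) (n : ℕ) (idx : Fin (n + 1) → ℕ) (hidx : StrictMono idx) :
    ∫ ω, φ ^ (∑ j, ξ (idx j) ω) ∂μ ≤ φ * ((φ - 1) * p + 1) ^ n := by
  have hξ1 : ∀ i ω, ξ i ω ≤ 1 := fun i ω ↦ by rcases hξ01 i ω with h | h <;> simp [h]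
  have hφ0 : 0 ≤ φ := by linarith
  induction n with
  | zero =>
    calc ∫ ω, φ ^ (∑ j, ξ (idx j) ω) ∂μ ≤ ∫ _, φ ∂μ :=
          integral_mono_of_nonneg (ae_of_all _ fun ω ↦ Real.rpow_nonneg hφ0 _) (integrable_const φ)
            (ae_of_all _ fun ω ↦ by
              simpa using rpow_sum_le_pow (Finset.univ : Finset (Fin 1)) hφ fun j _ ↦ hξ1 _ ω)
      _ = φ * ((φ - 1) * p + 1) ^ 0 := by simp
  | succ n ih =>
    obtain ⟨k, hk⟩ : ∃ k, idx (Fin.last (n + 1)) = k + 1 :=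
      Nat.exists_eq_add_one.mpr ((Nat.zero_le _).trans_lt (hidx (Fin.last_pos)))
    set F : Ω → ℝ := fun ω ↦ φ ^ (∑ j : Fin (n + 1), ξ (idx j.castSucc) ω)
    have hF : StronglyMeasurable[ℱ k] F := by
      refine (measurable_const.pow (Finset.measurable_sum _ fun j _ ↦ ?_)).stronglyMeasurable
      have : idx j.castSucc ≤ k := by have := hidx (Fin.castSucc_lt_last j); omega
      exact (hadapted _).mono (ℱ.mono this) le_rfl
    have hsplit : ∀ ω, φ ^ (∑ j, ξ (idx j) ω) = F ω * φ ^ ξ (k + 1) ω := fun ω ↦ by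
      rw [Fin.sum_univ_castSucc, Real.rpow_add (by linarith), hk]
    calc ∫ ω, φ ^ (∑ j, ξ (idx j) ω) ∂μ = ∫ ω, F ω * φ ^ ξ (k + 1) ω ∂μ := by simp_rw [hsplit]
      _ ≤ ((φ - 1) * p + 1) * ∫ ω, F ω ∂μ :=
        integral_mul_le_of_condExp_le_s15 (ℱ.le k) hF (fun ω ↦ Real.rpow_nonneg hφ0 _)
          (fun ω ↦ rpow_sum_le_pow Finset.univ hφ fun j _ ↦ hξ1 _ ω)
          (integrable_rpow_of_le_one hφ ((hadapted _).mono (ℱ.le _) le_rfl) (hξ1 _))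
          (condExp_rpow_le_of_condExp_indicator_le (ℱ.le k) hφ
            ((hadapted _).mono (ℱ.le _) le_rfl) (hξ01 _) (hcond k))
      _ ≤ ((φ - 1) * p + 1) * (φ * ((φ - 1) * p + 1) ^ n) :=
        mul_le_mul_of_nonneg_left (ih _ (hidx.comp Fin.strictMono_castSucc)) (by nlinarith)
      _ = φ * ((φ - 1) * p + 1) ^ (n + 1) := by ring

end

theorem expectation_product_bound_general
    {Ω : Type*} [MeasurableSpace Ω] (μ : Measure Ω) [IsProbabilityMeasure μ]
    (ℱ : Filtration ℕ (inferInstance : MeasurableSpace Ω))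
    (ptil : ℝ) (hp : ptil ∈ Set.Icc (0 : ℝ) 1)
    (φ : ℝ) (hφ : 1 < φ)
    (ξ : ℕ → Ω → ℝ)
    (hξ01 : ∀ i ω, ξ i ω = 0 ∨ ξ i ω = 1)
    (hadapted : Adapted ℱ ξ)
    (hcond : ∀ i, (μ[Set.indicator {ω | ξ (i + 1) ω = 1} (fun _ => (1 : ℝ)) | ℱ i])
      ≤ᵐ[μ] fun _ => ptil)
    (s : ℕ)
    (idx : Fin s → ℕ) (hidx : StrictMono idx) :
    (∫ ω, φ ^ (∑ j : Fin s, ξ (idx j) ω) ∂μ)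
      ≤ φ * ((φ - 1) * ptil + 1) ^ (s - 1) := by
  cases s with
  -- for `s = 0` the truncated `s - 1` turns the bound into `1 ≤ φ`
  | zero => simpa using hφ.le
  | succ n => simpa using integral_rpow_sum_le hφ.le hp.1 hξ01 hadapted hcond n idx hidx

/-- Lemma 6, Appendix: for a {0,1}-valued process `ξ` adapted to
`(𝓕_i)` with conditional transition probability into state 1 bounded by
`p̃ ∈ [0,1]`, and any `φ > 1`, for every `s ≥ 1` and strictly increasing indices
`i₁ < ⋯ < i_s` one has `E[φ^{∑_j ξ(i_j)}] ≤ φ((φ−1)p̃+1)^{s−1}`. -/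
theorem expectation_product_bound
    {Ω : Type*} [MeasurableSpace Ω] (μ : Measure Ω) [IsProbabilityMeasure μ]
    (ℱ : Filtration ℕ (inferInstance : MeasurableSpace Ω))
    (ptil : ℝ) (hp : ptil ∈ Set.Icc (0 : ℝ) 1)
    (φ : ℝ) (hφ : 1 < φ)
    (ξ : ℕ → Ω → ℝ)
    (hξ01 : ∀ i ω, ξ i ω = 0 ∨ ξ i ω = 1)
    (hadapted : Adapted ℱ ξ)
    (hcond : ∀ i, (μ[Set.indicator {ω | ξ (i + 1) ω = 1} (fun _ => (1 : ℝ)) | ℱ i])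
      ≤ᵐ[μ] fun _ => ptil)
    (s : ℕ) (hs : 1 ≤ s)
    (idx : Fin s → ℕ) (hidx : StrictMono idx) :
    (∫ ω, φ ^ (∑ j : Fin s, ξ (idx j) ω) ∂μ)
      ≤ φ * ((φ - 1) * ptil + 1) ^ (s - 1) :=
  expectation_product_bound_general μ ℱ ptil hp φ hφ ξ hξ01 hadapted hcond s idx hidx
end

section
/- Let l be a {0,1}-valued stochastic process with partial sums L(k) = ∑_{i=0}^{k-1} l(i) satisfying limsup_{k→∞} L(k)/k ≤ ρ almost surely, where ρ ∈ [0,1]. Let β ∈ (0,1) and φ ∈ [1,∞) satisfy (1−ρ)·ln β + ρ·ln φ < 0. Then the random products η(k) := ∏_{i=0}^{k-1} ( (1 − l(i))·β + l(i)·φ ) converge to 0 almost surely as k → ∞; in fact, almost surely limsup_{k→∞} (ln η(k))/k ≤ (1−ρ)·ln β + ρ·ln φ < 0. -/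
open MeasureTheory Filter

/-!
Since every factor is `β` or `φ`, `log η(k) / k = log β + (L(k) / k) (log φ - log β)` is an
increasing affine function of the loss frequency `L(k) / k ∈ [0, 1]`, so its limsup is at most
`(1 - ρ) log β + ρ log φ`. Once this limsup `T` is negative, eventually `η(k) ≤ exp (k T / 2)`.
-/

open Finset Real Topology

section LossProducts

variable {β φ : ℝ}

lemma loss_factor_pos {x : ℝ} (hx : x = 0 ∨ x = 1) (hβ : 0 < β) (hφ : 0 < φ) :
    0 < (1 - x) * β + x * φ := by
  rcases hx with rfl | rfl <;> simpa

lemma log_loss_factor {x : ℝ} (hx : x = 0 ∨ x = 1) :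
    log ((1 - x) * β + x * φ) = log β + x * (log φ - log β) := by
  rcases hx with rfl | rfl <;> simp

variable {x : ℕ → ℝ}

lemma log_prod_loss_factors (hx : ∀ i, x i = 0 ∨ x i = 1) (hβ : 0 < β) (hφ : 0 < φ) (k : ℕ) :
    log (∏ i ∈ range k, ((1 - x i) * β + x i * φ))
      = k * log β + (∑ i ∈ range k, x i) * (log φ - log β) := by
  rw [log_prod fun i _ => (loss_factor_pos (hx i) hβ hφ).ne']
  simp only [log_loss_factor (hx _), sum_add_distrib, sum_const, card_range,
    nsmul_eq_mul, sum_mul]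

lemma loss_frequency_mem_Icc (hx : ∀ i, x i = 0 ∨ x i = 1) (k : ℕ) :
    (∑ i ∈ range k, x i) / k ∈ Set.Icc (0 : ℝ) 1 := by
  have hx0 : ∀ i, 0 ≤ x i := fun i => by rcases hx i with h | h <;> simp [h]
  have hx1 : ∀ i, x i ≤ 1 := fun i => by rcases hx i with h | h <;> simp [h]
  refine ⟨div_nonneg (sum_nonneg fun i _ => hx0 i) k.cast_nonneg,
    div_le_one_of_le₀ ?_ k.cast_nonneg⟩
  simpa using sum_le_sum fun i (_ : i ∈ range k) => hx1 i

lemma limsup_log_prod_loss_factors_div_le (hx : ∀ i, x i = 0 ∨ x i = 1) (hβ : 0 < β)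
    (hβφ : β ≤ φ) {ρ : ℝ}
    (hρ : limsup (fun k : ℕ => (∑ i ∈ range k, x i) / k) atTop ≤ ρ) :
    limsup (fun k : ℕ => log (∏ i ∈ range k, ((1 - x i) * β + x i * φ)) / k) atTop
      ≤ (1 - ρ) * log β + ρ * log φ := by
  set u : ℕ → ℝ := fun k => (∑ i ∈ range k, x i) / k
  set g : ℝ → ℝ := fun y => log β + y * (log φ - log β)
  have hφ : 0 < φ := hβ.trans_le hβφ
  have hg : Monotone g := fun a b hab =>
    add_le_add_right (mul_le_mul_of_nonneg_right hab (sub_nonneg.2 (log_le_log hβ hβφ))) _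
  have hu : ∀ k, u k ∈ Set.Icc (0 : ℝ) 1 := loss_frequency_mem_Icc hx
  have hlog : (fun k : ℕ => log (∏ i ∈ range k, ((1 - x i) * β + x i * φ)) / k)
      =ᶠ[atTop] g ∘ u := by
    filter_upwards [eventually_ne_atTop 0] with k hk
    have hk : (k : ℝ) ≠ 0 := Nat.cast_ne_zero.2 hk
    simp only [Function.comp, g, u, log_prod_loss_factors hx hβ hφ]
    field_simp
  calc limsup _ atTop = limsup (g ∘ u) atTop := limsup_congr hlog
    _ = g (limsup u atTop) :=
      (hg.map_limsup_of_continuousAt u (by fun_prop) (isBoundedUnder_of ⟨1, fun k => (hu k).2⟩)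
        (isBoundedUnder_of ⟨0, fun k => (hu k).1⟩).isCoboundedUnder_le).symm
    _ ≤ g ρ := hg hρ
    _ = (1 - ρ) * log β + ρ * log φ := by ring

end LossProducts

lemma tendsto_zero_of_limsup_log_div_neg {p : ℕ → ℝ} (hp : ∀ k, 0 ≤ p k)
    (h : limsup (fun k : ℕ => log (p k) / k) atTop < 0) : Tendsto p atTop (𝓝 0) := by
  set T := limsup (fun k : ℕ => log (p k) / k) atTop
  -- the junk value of an unbounded `limsup` in `ℝ` is `0`
  have hbdd : IsBoundedUnder (· ≤ ·) atTop fun k : ℕ => log (p k) / k := by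
    by_contra hnot
    exact h.ne (Real.limsup_of_not_isBoundedUnder hnot)
  have hexp : Tendsto (fun k : ℕ => exp (T / 2 * k)) atTop (𝓝 0) :=
    tendsto_exp_atBot.comp <|
      (tendsto_const_mul_atBot_of_neg (by linarith)).2 tendsto_natCast_atTop_atTop
  refine squeeze_zero' (Eventually.of_forall hp) ?_ hexp
  filter_upwards [eventually_lt_of_limsup_lt (by linarith : T < T / 2) hbdd,
    eventually_gt_atTop 0] with k hk hk0
  calc p k ≤ exp (log (p k)) := le_exp_log _
    _ ≤ exp (T / 2 * k) := exp_le_exp.2 ((div_lt_iff₀ (by exact_mod_cast hk0)).1 hk).le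

theorem lyapunov_products_tendsto_zero_general
    {Ω : Type*} [MeasurableSpace Ω] (μ : Measure Ω)
    (l : ℕ → Ω → ℝ)
    (h01 : ∀ i ω, l i ω = 0 ∨ l i ω = 1)
    (ρ : ℝ)
    (hlim : ∀ᵐ ω ∂μ,
      limsup (fun k : ℕ => (∑ i ∈ Finset.range k, l i ω) / k) atTop ≤ ρ)
    (β φ : ℝ) (hβ : β ∈ Set.Ioo (0 : ℝ) 1) (hφ : 1 ≤ φ)
    (hrate : (1 - ρ) * Real.log β + ρ * Real.log φ < 0) :
    ∀ᵐ ω ∂μ,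
      Tendsto (fun k : ℕ =>
          ∏ i ∈ Finset.range k, ((1 - l i ω) * β + l i ω * φ)) atTop (nhds 0) ∧
      limsup (fun k : ℕ =>
          Real.log (∏ i ∈ Finset.range k, ((1 - l i ω) * β + l i ω * φ)) / k) atTop
        ≤ (1 - ρ) * Real.log β + ρ * Real.log φ := by
  filter_upwards [hlim] with ω hω
  have hβφ : β ≤ φ := hβ.2.le.trans hφ
  have hbound := limsup_log_prod_loss_factors_div_le (h01 · ω) hβ.1 hβφ hω
  have hprod_nonneg : ∀ k, 0 ≤ ∏ i ∈ range k, ((1 - l i ω) * β + l i ω * φ) := fun k =>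
    prod_nonneg fun i _ => (loss_factor_pos (h01 i ω) hβ.1 (hβ.1.trans_le hβφ)).le
  exact ⟨tendsto_zero_of_limsup_log_div_neg hprod_nonneg (hbound.trans_lt hrate), hbound⟩

/-- if the long-run loss ratio is at most `ρ` a.s. and
`(1−ρ)·ln β + ρ·ln φ < 0`, then the products
`η(k) = ∏_{i<k} ((1−l(i))β + l(i)φ)` tend to `0` almost surely, and in fact
a.s. `limsup_k (ln η(k))/k ≤ (1−ρ)·ln β + ρ·ln φ`. -/
theorem lyapunov_products_tendsto_zero
    {Ω : Type*} [MeasurableSpace Ω] (μ : Measure Ω) [IsProbabilityMeasure μ]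
    (l : ℕ → Ω → ℝ)
    (h01 : ∀ i ω, l i ω = 0 ∨ l i ω = 1)
    (ρ : ℝ) (hρ : ρ ∈ Set.Icc (0 : ℝ) 1)
    (hlim : ∀ᵐ ω ∂μ,
      limsup (fun k : ℕ => (∑ i ∈ Finset.range k, l i ω) / k) atTop ≤ ρ)
    (β φ : ℝ) (hβ : β ∈ Set.Ioo (0 : ℝ) 1) (hφ : 1 ≤ φ)
    (hrate : (1 - ρ) * Real.log β + ρ * Real.log φ < 0) :
    ∀ᵐ ω ∂μ,
      Tendsto (fun k : ℕ =>
          ∏ i ∈ Finset.range k, ((1 - l i ω) * β + l i ω * φ)) atTop (nhds 0) ∧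
      limsup (fun k : ℕ =>
          Real.log (∏ i ∈ Finset.range k, ((1 - l i ω) * β + l i ω * φ)) / k) atTop
        ≤ (1 - ρ) * Real.log β + ρ * Real.log φ :=
  lyapunov_products_tendsto_zero_general μ l h01 ρ hlim β φ hβ hφ hrate
end

section
/- Let l be a {0,1}-valued stochastic process with partial sums L(k) = ∑_{i=0}^{k-1} l(i) satisfying liminf_{k→∞} L(k)/k ≥ σ almost surely, where σ ∈ [0,1]. Let β̂ ∈ (0,1) and φ̂ ∈ [1,∞) satisfy (1−σ)·ln β̂ + σ·ln φ̂ > 0. Then the random products η(k) := ∏_{i=0}^{k-1} ( (1 − l(i))·β̂ + l(i)·φ̂ ) diverge to +∞ almost surely as k → ∞; in fact, almost surely liminf_{k→∞} (ln η(k))/k ≥ (1−σ)·ln β̂ + σ·ln φ̂ > 0. -/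
/-!
For a `{0,1}`-valued `l` every factor of `η(k)` is `β̂` or `φ̂`, so for `k ≥ 1`
`ln η(k) / k = ln β̂ + (L(k) / k) (ln φ̂ - ln β̂)`, an increasing affine image of the loss ratio
`L(k) / k ∈ [0, 1]`. Continuous monotone maps commute with `liminf`, hence pathwise
`liminf ln η(k) / k = (1 - ℓ) ln β̂ + ℓ ln φ̂` with `ℓ = liminf L(k) / k ≥ σ`. Once this liminf
is positive, `ln η(k) ≥ c k` eventually for some `c > 0`, so `η(k) → ∞`.
-/

open MeasureTheory Filter Finset Real

lemma tendsto_atTop_of_pos_lt_liminf_log_div {u : ℕ → ℝ} (hu : ∀ k, 0 < u k)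
    (hbdd : IsBoundedUnder (· ≥ ·) atTop fun k => log (u k) / k)
    (hpos : 0 < liminf (fun k => log (u k) / k) atTop) :
    Tendsto u atTop atTop := by
  obtain ⟨c, hc0, hc⟩ := exists_between hpos
  have hlin : ∀ᶠ k : ℕ in atTop, c * k ≤ log (u k) := by
    filter_upwards [eventually_lt_of_lt_liminf hc hbdd, eventually_gt_atTop 0] with k hk hk0
    exact ((lt_div_iff₀ (by positivity)).mp hk).le
  have hlog : Tendsto (fun k => log (u k)) atTop atTop :=
    tendsto_atTop_mono' _ hlin (tendsto_natCast_atTop_atTop.const_mul_atTop hc0)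
  refine tendsto_atTop_mono (fun k => ?_) (tendsto_atTop_add_const_right _ 1 hlog)
  linarith [log_le_sub_one_of_pos (hu k)]

lemma sum_range_div_mem_Icc {l : ℕ → ℝ} (hl : ∀ i, l i ∈ Set.Icc (0 : ℝ) 1) (k : ℕ) :
    (∑ i ∈ range k, l i) / k ∈ Set.Icc (0 : ℝ) 1 := by
  have hsum : ∑ i ∈ range k, l i ≤ k := by
    simpa using sum_le_sum fun i (_ : i ∈ range k) => (hl i).2
  exact ⟨div_nonneg (sum_nonneg fun i _ => (hl i).1) k.cast_nonneg,
    div_le_one_of_le₀ hsum k.cast_nonneg⟩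

section ZeroOneProducts

variable {l : ℕ → ℝ} {β φ : ℝ}

lemma log_prod_one_sub_mul_add_mul (hl : ∀ i, l i = 0 ∨ l i = 1) (hβ : β ≠ 0)
    (hφ : φ ≠ 0) (k : ℕ) :
    log (∏ i ∈ range k, ((1 - l i) * β + l i * φ)) =
      k * log β + (∑ i ∈ range k, l i) * (log φ - log β) := by
  have hne : ∀ i, (1 - l i) * β + l i * φ ≠ 0 := fun i => by
    rcases hl i with h | h <;> simp [h, hβ, hφ]
  have hlog : ∀ i, log ((1 - l i) * β + l i * φ) = log β + l i * (log φ - log β) :=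
    fun i => by rcases hl i with h | h <;> simp [h]
  rw [log_prod fun i _ => hne i]
  simp only [hlog, sum_add_distrib, sum_const, card_range, nsmul_eq_mul, sum_mul]

lemma log_prod_div_eventuallyEq (hl : ∀ i, l i = 0 ∨ l i = 1) (hβ : β ≠ 0)
    (hφ : φ ≠ 0) :
    (fun k : ℕ => log (∏ i ∈ range k, ((1 - l i) * β + l i * φ)) / k) =ᶠ[atTop]
      fun k => log β + (∑ i ∈ range k, l i) / k * (log φ - log β) := by
  filter_upwards [eventually_ne_atTop 0] with k hk
  rw [log_prod_one_sub_mul_add_mul hl hβ hφ]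
  field_simp

lemma isBoundedUnder_ge_log_prod_div (hl : ∀ i, l i = 0 ∨ l i = 1) (hβ : 0 < β)
    (hβφ : β ≤ φ) :
    IsBoundedUnder (· ≥ ·) atTop
      fun k : ℕ => log (∏ i ∈ range k, ((1 - l i) * β + l i * φ)) / k := by
  have hd : 0 ≤ log φ - log β := sub_nonneg.2 (log_le_log hβ hβφ)
  refine isBoundedUnder_of_eventually_ge (a := log β) ?_
  filter_upwards [log_prod_div_eventuallyEq hl hβ.ne' (hβ.trans_le hβφ).ne'] with k hk
  rw [hk]
  have hratio := sum_range_div_mem_Icc (l := l) fun i => by rcases hl i with h | h <;> simp [h]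
  exact le_add_of_nonneg_right (mul_nonneg (hratio k).1 hd)

lemma liminf_log_prod_div (hl : ∀ i, l i = 0 ∨ l i = 1) (hβ : 0 < β) (hβφ : β ≤ φ) :
    liminf (fun k : ℕ => log (∏ i ∈ range k, ((1 - l i) * β + l i * φ)) / k) atTop =
      log β + liminf (fun k : ℕ => (∑ i ∈ range k, l i) / k) atTop * (log φ - log β) := by
  have hd : 0 ≤ log φ - log β := sub_nonneg.2 (log_le_log hβ hβφ)
  have hratio := sum_range_div_mem_Icc (l := l) fun i => by rcases hl i with h | h <;> simp [h]
  rw [liminf_congr (log_prod_div_eventuallyEq hl hβ.ne' (hβ.trans_le hβφ).ne')]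
  exact (Monotone.map_liminf_of_continuousAt (fun s t hst => by gcongr) _
    (by fun_prop : Continuous fun t : ℝ => log β + t * (log φ - log β)).continuousAt
    (isCoboundedUnder_ge_of_le atTop fun k => (hratio k).2)
    (isBoundedUnder_of_eventually_ge (.of_forall fun k => (hratio k).1))).symm

end ZeroOneProducts

theorem lyapunov_products_tendsto_atTop_general
    {Ω : Type*} [MeasurableSpace Ω] (μ : Measure Ω)
    (l : ℕ → Ω → ℝ)
    (h01 : ∀ i ω, l i ω = 0 ∨ l i ω = 1)
    (σ : ℝ)
    (hlim : ∀ᵐ ω ∂μ,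
      σ ≤ liminf (fun k : ℕ => (∑ i ∈ Finset.range k, l i ω) / k) atTop)
    (βhat φhat : ℝ) (hβ : βhat ∈ Set.Ioo (0 : ℝ) 1) (hφ : 1 ≤ φhat)
    (hrate : 0 < (1 - σ) * Real.log βhat + σ * Real.log φhat) :
    ∀ᵐ ω ∂μ,
      Tendsto (fun k : ℕ =>
          ∏ i ∈ Finset.range k, ((1 - l i ω) * βhat + l i ω * φhat)) atTop atTop ∧
      (1 - σ) * Real.log βhat + σ * Real.log φhat
        ≤ liminf (fun k : ℕ =>
            Real.log (∏ i ∈ Finset.range k, ((1 - l i ω) * βhat + l i ω * φhat)) / k)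
            atTop := by
  filter_upwards [hlim] with ω hω
  have hβφ : βhat ≤ φhat := hβ.2.le.trans hφ
  have hbound : (1 - σ) * Real.log βhat + σ * Real.log φhat ≤
      liminf (fun k : ℕ =>
        Real.log (∏ i ∈ Finset.range k, ((1 - l i ω) * βhat + l i ω * φhat)) / k) atTop := by
    rw [liminf_log_prod_div (h01 · ω) hβ.1 hβφ]
    have hd : 0 ≤ log φhat - log βhat := sub_nonneg.2 (log_le_log hβ.1 hβφ)
    linarith [mul_le_mul_of_nonneg_right hω hd]
  have hfactor : ∀ i, 0 < (1 - l i ω) * βhat + l i ω * φhat := fun i => by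
    rcases h01 i ω with h | h <;> simp [h] <;> linarith [hβ.1]
  exact ⟨tendsto_atTop_of_pos_lt_liminf_log_div (fun _ => prod_pos fun i _ => hfactor i)
    (isBoundedUnder_ge_log_prod_div (h01 · ω) hβ.1 hβφ) (hrate.trans_le hbound), hbound⟩

/-- if the long-run loss ratio is at least `σ` a.s. and
`(1−σ)·ln β̂ + σ·ln φ̂ > 0`, then the products
`η(k) = ∏_{i<k} ((1−l(i))β̂ + l(i)φ̂)` diverge to `+∞` almost surely, and in
fact a.s. `liminf_k (ln η(k))/k ≥ (1−σ)·ln β̂ + σ·ln φ̂`. -/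
theorem lyapunov_products_tendsto_atTop
    {Ω : Type*} [MeasurableSpace Ω] (μ : Measure Ω) [IsProbabilityMeasure μ]
    (l : ℕ → Ω → ℝ)
    (h01 : ∀ i ω, l i ω = 0 ∨ l i ω = 1)
    (σ : ℝ) (hσ : σ ∈ Set.Icc (0 : ℝ) 1)
    (hlim : ∀ᵐ ω ∂μ,
      σ ≤ liminf (fun k : ℕ => (∑ i ∈ Finset.range k, l i ω) / k) atTop)
    (βhat φhat : ℝ) (hβ : βhat ∈ Set.Ioo (0 : ℝ) 1) (hφ : 1 ≤ φhat)
    (hrate : 0 < (1 - σ) * Real.log βhat + σ * Real.log φhat) :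
    ∀ᵐ ω ∂μ,
      Tendsto (fun k : ℕ =>
          ∏ i ∈ Finset.range k, ((1 - l i ω) * βhat + l i ω * φhat)) atTop atTop ∧
      (1 - σ) * Real.log βhat + σ * Real.log φhat
        ≤ liminf (fun k : ℕ =>
            Real.log (∏ i ∈ Finset.range k, ((1 - l i ω) * βhat + l i ω * φhat)) / k)
            atTop :=
  lyapunov_products_tendsto_atTop_general μ l h01 σ hlim βhat φhat hβ hφ hrate
end

section
/- Let s ≥ 1 be an integer and let l : ℕ → {0,1} be a sequence with at most s consecutive ones, i.e. for every t ∈ ℕ, ∑_{i=t}^{t+s} l(i) ≤ s. Then for every k ≥ 1, the partial sum satisfies ∑_{i=0}^{k-1} l(i) ≤ 1 + k·s/(s+1); that is, the bounded-consecutive-dropout model satisfies the attack condition ∑_{i=0}^{k-1} l(i) ≤ κ + k/τ with κ = 1 and τ = (s+1)/s. -/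
/-- a deterministic {0,1}-valued packet-loss sequence with at most
`s` consecutive ones (i.e. `∑_{i=t}^{t+s} l(i) ≤ s` for all `t`) satisfies the
attack condition `∑_{i<k} l(i) ≤ κ + k/τ` with `κ = 1` and `τ = (s+1)/s`, i.e.
`∑_{i<k} l(i) ≤ 1 + k·s/(s+1)` for all `k ≥ 1`. -/
theorem bounded_consecutive_losses_satisfy_attack_condition
    (s : ℕ) (hs : 1 ≤ s)
    (l : ℕ → ℝ)
    (h01 : ∀ i, l i = 0 ∨ l i = 1)
    (hcons : ∀ t : ℕ, (∑ i ∈ Finset.Icc t (t + s), l i) ≤ s) :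
    ∀ k : ℕ, 1 ≤ k →
      (∑ i ∈ Finset.range k, l i) ≤ 1 + (k : ℝ) * s / (s + 1) := by
  have hle1 : ∀ i, l i ≤ 1 := by
    intro i; rcases h01 i with h | h <;> simp [h]
  have hnn : ∀ i, 0 ≤ l i := by
    intro i; rcases h01 i with h | h <;> simp [h]
  -- key lemma: for all q and r ≤ s, sum over range (q*(s+1)+r) ≤ q*s + r
  have key : ∀ q r : ℕ, r ≤ s →
      (∑ i ∈ Finset.range (q * (s + 1) + r), l i) ≤ q * s + r := by
    intro q
    induction q with
    | zero =>
      intro r hr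
      simp only [Nat.zero_mul, Nat.zero_add, Nat.cast_zero, zero_mul, zero_add]
      calc (∑ i ∈ Finset.range r, l i) ≤ ∑ i ∈ Finset.range r, (1 : ℝ) :=
            Finset.sum_le_sum fun i _ => hle1 i
        _ = r := by simp
    | succ q ih =>
      intro r hr
      have hsplit : (q + 1) * (s + 1) + r = (q * (s + 1) + r) + (s + 1) := by ring
      rw [hsplit, Finset.sum_range_add]
      have hwin : (∑ i ∈ Finset.range (s + 1), l (q * (s + 1) + r + i)) ≤ s := by
        have := hcons (q * (s + 1) + r)
        rw [show Finset.Icc (q * (s + 1) + r) (q * (s + 1) + r + s)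
            = Finset.map (addLeftEmbedding (q * (s + 1) + r)) (Finset.range (s + 1)) from ?_] at this
        · simpa [addLeftEmbedding] using this
        · ext x
          simp [Finset.mem_map, addLeftEmbedding, Nat.lt_succ_iff]
          constructor
          · intro ⟨h1, h2⟩
            exact ⟨x - (q * (s + 1) + r), by omega, by omega⟩
          · rintro ⟨a, ha, rfl⟩; omega
      have := ih r hr
      push_cast
      push_cast at this hwin
      linarith
  intro k hk
  obtain ⟨q, r, hr, hkeq⟩ : ∃ q r : ℕ, r ≤ s ∧ k = q * (s + 1) + r :=
    ⟨k / (s + 1), k % (s + 1), Nat.lt_succ_iff.mp (Nat.mod_lt k (Nat.succ_pos s)),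
      (Nat.div_add_mod' k (s + 1)).symm⟩
  have hsum : (∑ i ∈ Finset.range k, l i) ≤ q * s + r := by
    rw [hkeq]; exact key q r hr
  have hs1 : (0 : ℝ) < (s : ℝ) + 1 := by positivity
  have hrle : (r : ℝ) ≤ s := by exact_mod_cast hr
  refine hsum.trans ?_
  have hkcast : (k : ℝ) = q * (s + 1) + r := by rw [hkeq]; push_cast; ring
  rw [hkcast, ← sub_nonneg]
  have heq : 1 + ((q:ℝ) * (s + 1) + r) * s / (s + 1) - ((q:ℝ) * s + r)
      = ((s:ℝ) + 1 - r) / (s + 1) := by field_simp; ring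
  rw [heq]
  apply div_nonneg _ (le_of_lt hs1)
  linarith
end
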